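/- arXiv:2407.10041 — 11 statements merged into one kernel-verified Lean document; each statement's English description precedes it below -/
import Mathlib

section
/- Let I be a homogeneous ideal of ℂ[x₀,…,xₙ], and for each d ∈ ℕ let a_d be the (finite) ℂ-dimension of the degree-d homogeneous component of the graded quotient ring ℂ[x₀,…,xₙ]/I, i.e. of the image under the quotient map of the ℂ-subspace of homogeneous polynomials of degree d. Then there exists a polynomial P with rational coefficients and a natural number N such that a_d = P(d) for all d ≥ N. -/
open MvPolynomial

/-- The ℂ-dimension of the degree-`d` homogeneous component of the graded quotient ring
`ℂ[x₀,…,xₙ]/I`, i.e. of the image under the quotient map of the subspace of homogeneous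
polynomials of degree `d`. -/
noncomputable def quotientComponentDim (n : ℕ) (I : Ideal (MvPolynomial (Fin (n + 1)) ℂ))
    (d : ℕ) : ℕ :=
  Module.finrank ℂ
    ((homogeneousSubmodule (Fin (n + 1)) ℂ d).map (Ideal.Quotient.mkₐ ℂ I).toLinearMap)

section HilbertAux

open Finsupp Finset

def EvP (f : ℕ → ℚ) : Prop := ∃ (P : Polynomial ℚ) (N : ℕ), ∀ d, N ≤ d → f d = P.eval (d : ℚ)

lemma EvP.sub {f g : ℕ → ℚ} (hf : EvP f) (hg : EvP g) : EvP (fun d => f d - g d) := by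
  obtain ⟨P, N, hP⟩ := hf; obtain ⟨Q, M, hQ⟩ := hg
  exact ⟨P - Q, max N M, fun d hd => by
    simp [hP d (le_trans (le_max_left _ _) hd), hQ d (le_trans (le_max_right _ _) hd)]⟩

lemma EvP.shift {f : ℕ → ℚ} (hf : EvP f) (e : ℕ) : EvP (fun d => f (d - e)) := by
  obtain ⟨P, N, hP⟩ := hf
  refine ⟨P.comp (Polynomial.X - Polynomial.C (e : ℚ)), N + e, fun d hd => ?_⟩
  rw [Polynomial.eval_comp]
  simp only [Polynomial.eval_sub, Polynomial.eval_X, Polynomial.eval_C]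
  rw [hP (d - e) (by omega)]
  congr 1
  have he : e ≤ d := by omega
  push_cast [he]
  ring

lemma EvP.congr_event {f g : ℕ → ℚ} (hf : EvP f) (N₀ : ℕ) (h : ∀ d, N₀ ≤ d → f d = g d) :
    EvP g := by
  obtain ⟨P, N, hP⟩ := hf
  exact ⟨P, max N N₀, fun d hd => by
    rw [← h d (le_trans (le_max_right _ _) hd)]; exact hP d (le_trans (le_max_left _ _) hd)⟩

lemma EvP.choose_poly (n : ℕ) : EvP (fun d => ((d + n).choose n : ℚ)) := by
  refine ⟨Polynomial.C (1 / n.factorial : ℚ) *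
    ∏ j ∈ Finset.range n, (Polynomial.X + Polynomial.C ((j : ℚ) + 1)), 0, fun d _ => ?_⟩
  have key : ∀ m : ℕ, ((d + m).choose m : ℚ) * m.factorial
      = ∏ j ∈ Finset.range m, ((d : ℚ) + (j + 1)) := by
    intro m
    induction m with
    | zero => simp
    | succ m ih =>
      rw [Finset.prod_range_succ, ← ih]
      have hnat : (d + (m+1)).choose (m+1) * (m+1) = (d + m + 1) * ((d + m).choose m) := by
        have h := Nat.add_one_mul_choose_eq (d + m) m
        have h2 : d + (m+1) = (d + m) + 1 := by omega
        rw [h2]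
        simpa [Nat.succ_eq_add_one, mul_comm] using h.symm
      have hfac : ((m+1).factorial : ℚ) = (m+1) * m.factorial := by
        rw [Nat.factorial_succ]; push_cast; ring
      rw [hfac]
      have hq : ((d + (m+1)).choose (m+1) : ℚ) * (m+1) = ((d + m + 1) : ℚ) * ((d + m).choose m) := by
        exact_mod_cast congrArg (Nat.cast : ℕ → ℚ) hnat
      push_cast at hq ⊢
      nlinarith [hq]
  rw [Polynomial.eval_mul, Polynomial.eval_C, Polynomial.eval_prod]
  simp only [Polynomial.eval_add, Polynomial.eval_X, Polynomial.eval_C]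
  rw [← key n]
  have : (n.factorial : ℚ) ≠ 0 := by positivity
  field_simp
open MvPolynomial Finsupp Finset

variable (n : ℕ)

lemma degree_add' (a b : Fin (n+1) →₀ ℕ) : (a + b).degree = a.degree + b.degree := by
  simp [Finsupp.degree_eq_weight_one, map_add]

noncomputable def cnt (F : Finset (Fin (n+1) →₀ ℕ)) (d : ℕ) : ℕ :=
  ((Finset.finsuppAntidiag (Finset.univ : Finset (Fin (n+1))) d).filter
    (fun m => ∀ f ∈ F, ¬ f ≤ m)).card

lemma mem_deg {d : ℕ} {m : Fin (n+1) →₀ ℕ} :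
    m ∈ Finset.finsuppAntidiag (Finset.univ : Finset (Fin (n+1))) d ↔ m.degree = d := by
  rw [Finset.mem_finsuppAntidiag']
  simp [Finsupp.degree_apply, Finsupp.sum]

lemma cnt_rec (F : Finset (Fin (n+1) →₀ ℕ)) (f : Fin (n+1) →₀ ℕ) (hf : f ∈ F) (d : ℕ)
    (hd : f.degree ≤ d) :
    cnt n F d + cnt n ((F.erase f).image (· - f)) (d - f.degree) = cnt n (F.erase f) d := by
  classical
  set A := Finset.finsuppAntidiag (Finset.univ : Finset (Fin (n+1))) d with hA
  set S := A.filter (fun m => ∀ g ∈ F.erase f, ¬ g ≤ m) with hS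
  have hpred : ∀ m : Fin (n+1) →₀ ℕ,
      (∀ g ∈ F, ¬ g ≤ m) ↔ ((∀ g ∈ F.erase f, ¬ g ≤ m) ∧ ¬ f ≤ m) := by
    intro m
    constructor
    · exact fun h => ⟨fun g hg => h g (Finset.mem_of_mem_erase hg), h f hf⟩
    · rintro ⟨h1, h2⟩ g hg
      rcases eq_or_ne g f with rfl | hne
      · exact h2
      · exact h1 g (Finset.mem_erase.2 ⟨hne, hg⟩)
  have h1 : cnt n F d = (S.filter (fun m => ¬ f ≤ m)).card := by
    rw [cnt, hS, Finset.filter_filter]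
    congr 1
    apply Finset.filter_congr
    intro m _
    simp only [hpred m]
  have h2 : cnt n ((F.erase f).image (· - f)) (d - f.degree)
      = (S.filter (fun m => f ≤ m)).card := by
    rw [cnt]
    apply Finset.card_bij' (i := fun m' _ => f + m') (j := fun m _ => m - f)
    · intro m' hm'
      simp only [Finset.mem_filter, mem_deg] at hm'
      obtain ⟨hdeg, hall⟩ := hm'
      simp only [hS, Finset.mem_filter, mem_deg, hA]
      refine ⟨⟨?_, fun g hg => ?_⟩, le_self_add⟩
      · rw [degree_add' n, hdeg]; omega
      · intro hle
        apply hall (g - f) (Finset.mem_image.2 ⟨g, hg, rfl⟩)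
        exact tsub_le_iff_left.2 hle
    · intro m hm
      simp only [hS, Finset.mem_filter, mem_deg, hA] at hm
      obtain ⟨⟨hdeg, hall⟩, hfle⟩ := hm
      simp only [Finset.mem_filter, mem_deg]
      constructor
      · have h3 := degree_add' n f (m - f)
        rw [add_tsub_cancel_of_le hfle] at h3
        omega
      · intro g' hg'
        obtain ⟨g, hg, rfl⟩ := Finset.mem_image.1 hg'
        intro hle
        apply hall g hg
        have h4 := tsub_le_iff_left.1 hle
        rwa [add_tsub_cancel_of_le hfle] at h4
    · intro m' hm'
      simp [add_tsub_cancel_left]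
    · intro m hm
      simp only [hS, Finset.mem_filter] at hm
      exact add_tsub_cancel_of_le hm.2
  rw [h1, h2]
  have h3 : cnt n (F.erase f) d = S.card := rfl
  have h4 := Finset.card_filter_add_card_filter_not (s := S) (p := fun m => f ≤ m)
  rw [h3]
  omega

lemma cnt_empty (d : ℕ) : cnt n ∅ d = (d + n).choose n := by
  classical
  rw [cnt]
  have h1 : (Finset.finsuppAntidiag (Finset.univ : Finset (Fin (n+1))) d).filter
      (fun m => ∀ f ∈ (∅ : Finset (Fin (n+1) →₀ ℕ)), ¬ f ≤ m)
      = Finset.finsuppAntidiag (Finset.univ : Finset (Fin (n+1))) d := by simp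
  rw [h1]
  have hdt : ∀ s : Multiset (Fin (n+1)), (Multiset.toFinsupp s).degree = Multiset.card s := by
    intro s
    have := Finsupp.card_toMultiset (Multiset.toFinsupp s)
    rw [Multiset.toFinsupp_toMultiset] at this
    rw [this]; simp [Finsupp.degree_apply, Finsupp.sum]
  have h := Finset.card_bij' (s := Finset.finsuppAntidiag (Finset.univ : Finset (Fin (n+1))) d)
    (t := (Finset.univ : Finset (Sym (Fin (n+1)) d)))
    (fun m hm => ⟨Finsupp.toMultiset m, by
      rw [Finsupp.card_toMultiset]; have := (mem_deg n).1 hm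
      rw [← this]; simp [Finsupp.degree_apply, Finsupp.sum]⟩)
    (fun s hs => Multiset.toFinsupp (s : Multiset (Fin (n+1))))
    (fun a ha => Finset.mem_univ _)
    (fun s hs => by rw [mem_deg, hdt]; exact s.2)
    (fun m hm => by simp)
    (fun s hs => by apply Subtype.ext; simp [Multiset.toFinsupp_toMultiset])
  rw [h, Finset.card_univ, Sym.card_sym_eq_choose]
  have h2 : Fintype.card (Fin (n+1)) + d - 1 = d + n := by simp; omega
  rw [h2, Nat.choose_symm_add]

theorem cnt_evp (F : Finset (Fin (n+1) →₀ ℕ)) : EvP (fun d => (cnt n F d : ℚ)) := by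
  classical
  have H : ∀ k (F : Finset (Fin (n+1) →₀ ℕ)), F.card ≤ k → EvP (fun d => (cnt n F d : ℚ)) := by
    intro k
    induction k with
    | zero =>
      intro F hF
      have : F = ∅ := Finset.card_eq_zero.1 (by omega)
      subst this
      exact (EvP.choose_poly n).congr_event 0 (fun d _ => by rw [cnt_empty])
    | succ k ih =>
      intro F hF
      rcases F.eq_empty_or_nonempty with rfl | ⟨f, hf⟩
      · exact (EvP.choose_poly n).congr_event 0 (fun d _ => by rw [cnt_empty])
      · have h1 := ih (F.erase f) (by rw [Finset.card_erase_of_mem hf]; omega)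
        have h2 := ih ((F.erase f).image (· - f))
          (le_trans Finset.card_image_le (by rw [Finset.card_erase_of_mem hf]; omega))
        refine (h1.sub (h2.shift f.degree)).congr_event f.degree (fun d hd => ?_)
        have hrec := cnt_rec n F f hf d hd
        have : (cnt n F d : ℚ) + (cnt n ((F.erase f).image (· - f)) (d - f.degree) : ℚ)
            = (cnt n (F.erase f) d : ℚ) := by exact_mod_cast congrArg (Nat.cast : ℕ → ℚ) hrec
        linarith
  exact H F.card F le_rfl


variable (I : Ideal (MvPolynomial (Fin (n + 1)) ℂ))

noncomputable def lmon (f : MvPolynomial (Fin (n+1)) ℂ) : Lex (Fin (n+1) →₀ ℕ) :=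
  f.support.sup toLex

lemma le_lmon {f : MvPolynomial (Fin (n+1)) ℂ} {m : Fin (n+1) →₀ ℕ} (h : m ∈ f.support) :
    toLex m ≤ lmon n f := Finset.le_sup h

lemma lmon_mem {f : MvPolynomial (Fin (n+1)) ℂ} (h : f ≠ 0) : ofLex (lmon n f) ∈ f.support := by
  obtain ⟨m, hm, heq⟩ := Finset.exists_mem_eq_sup f.support (support_nonempty.2 h) toLex
  rw [lmon, heq]; exact hm

lemma coeff_zero_of_lmon_lt {f : MvPolynomial (Fin (n+1)) ℂ} {m : Fin (n+1) →₀ ℕ}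
    (h : lmon n f < toLex m) : coeff m f = 0 := by
  by_contra hc
  exact absurd (le_lmon n (MvPolynomial.mem_support_iff.2 hc)) (not_le.2 h)

lemma degree_of_mem_support {f : MvPolynomial (Fin (n+1)) ℂ} {d : ℕ} {m : Fin (n+1) →₀ ℕ}
    (hf : f.IsHomogeneous d) (hm : m ∈ f.support) : m.degree = d := by
  have := hf (MvPolynomial.mem_support_iff.1 hm)
  rw [Finsupp.degree_eq_weight_one]
  exact this

def LexpSet : Set (Fin (n+1) →₀ ℕ) :=
  {e | ∃ g ∈ I, g ≠ 0 ∧ (∃ k, g.IsHomogeneous k) ∧ ofLex (lmon n g) = e}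

open Classical in
noncomputable def stdSet (d : ℕ) : Finset (Fin (n+1) →₀ ℕ) :=
  (Finset.finsuppAntidiag (Finset.univ : Finset (Fin (n+1))) d).filter
    (fun m => ∀ e ∈ LexpSet n I, ¬ e ≤ m)

lemma mem_stdSet {d : ℕ} {m : Fin (n+1) →₀ ℕ} :
    m ∈ stdSet n I d ↔ m.degree = d ∧ ∀ e ∈ LexpSet n I, ¬ e ≤ m := by
  classical
  rw [stdSet, Finset.mem_filter, Finset.mem_finsuppAntidiag']
  constructor
  · rintro ⟨⟨h1, -⟩, h2⟩
    refine ⟨?_, fun e he => h2 e he⟩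
    rw [← h1]; simp [Finsupp.degree_apply, Finsupp.sum]
  · rintro ⟨h1, h2⟩
    refine ⟨⟨?_, by simp⟩, fun e he => h2 e he⟩
    rw [← h1]; simp [Finsupp.degree_apply, Finsupp.sum]

lemma span_step (d : ℕ) :
    ∀ (mb : Lex (Fin (n+1) →₀ ℕ)) (f : MvPolynomial (Fin (n+1)) ℂ),
      f.IsHomogeneous d → (∀ t ∈ f.support, toLex t ≤ mb) →
      (Ideal.Quotient.mkₐ ℂ I) f ∈ Submodule.span ℂ
        ((fun m => (Ideal.Quotient.mkₐ ℂ I) (monomial m (1:ℂ))) '' (stdSet n I d : Set (Fin (n+1) →₀ ℕ))) := by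
  intro mb
  induction mb using WellFoundedLT.induction with
  | ind mb IH =>
  intro f hf hbound
  by_cases hf0 : f = 0
  · subst hf0; simp only [map_zero]; exact Submodule.zero_mem _
  set m := ofLex (lmon n f) with hm_def
  have hm : m ∈ f.support := lmon_mem n hf0
  have hmd : m.degree = d := degree_of_mem_support n hf hm
  -- construct h
  have key : ∃ h : MvPolynomial (Fin (n+1)) ℂ, h.IsHomogeneous d ∧
      (Ideal.Quotient.mkₐ ℂ I) h ∈ Submodule.span ℂ
        ((fun m => (Ideal.Quotient.mkₐ ℂ I) (monomial m (1:ℂ))) '' (stdSet n I d : Set (Fin (n+1) →₀ ℕ))) ∧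
      coeff m h = coeff m f ∧ ∀ t, toLex m < toLex t → coeff t h = 0 := by
    by_cases hstd : ∀ e ∈ LexpSet n I, ¬ e ≤ m
    · -- m is standard
      refine ⟨(coeff m f) • monomial m (1:ℂ), ?_, ?_, ?_, ?_⟩
      · exact ((homogeneousSubmodule _ ℂ d).smul_mem _
          ((mem_homogeneousSubmodule _ _).1 (isHomogeneous_monomial (1:ℂ) hmd)))
      · rw [map_smul]
        exact Submodule.smul_mem _ _ (Submodule.subset_span ⟨m, (mem_stdSet n I).2 ⟨hmd, hstd⟩, rfl⟩)
      · simp [coeff_smul, coeff_monomial]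
      · intro t ht
        have : t ≠ m := fun h => by subst h; exact lt_irrefl _ ht
        simp [coeff_smul, coeff_monomial, Ne.symm this]
    · -- m is divisible by some leading exponent
      push_neg at hstd
      obtain ⟨e, ⟨g, hgI, hg0, ⟨k, hgk⟩, hlg⟩, hle⟩ := hstd
      have heg : e ∈ g.support := by rw [← hlg]; exact lmon_mem n hg0
      have hek : e.degree = k := degree_of_mem_support n hgk heg
      have hce : coeff e g ≠ 0 := MvPolynomial.mem_support_iff.1 heg
      set c := coeff m f / coeff e g with hc_def
      refine ⟨monomial (m - e) c * g, ?_, ?_, ?_, ?_⟩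
      · have hsum : (m - e).degree + k = d := by
          have h1 := degree_add' n (m - e) e
          rw [tsub_add_cancel_of_le hle] at h1
          omega
        have := (isHomogeneous_monomial c (rfl : (m - e).degree = (m - e).degree)).mul hgk
        rwa [hsum] at this
      · have : monomial (m - e) c * g ∈ I := Ideal.mul_mem_left _ _ hgI
        have hz : (Ideal.Quotient.mkₐ ℂ I) (monomial (m - e) c * g) = 0 := by
          rw [Ideal.Quotient.mkₐ_eq_mk, Ideal.Quotient.eq_zero_iff_mem]
          exact this
        rw [hz]; exact Submodule.zero_mem _
      · have hme : m - e + e = m := tsub_add_cancel_of_le hle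
        calc coeff m (monomial (m - e) c * g) = coeff ((m - e) + e) (monomial (m - e) c * g) := by
              rw [hme]
        _ = c * coeff e g := coeff_monomial_mul _ _ _ _
        _ = coeff m f := by rw [hc_def]; field_simp
      · intro t ht
        rw [coeff_monomial_mul']
        split_ifs with hdvd
        · have hlm : lmon n g = toLex e := by rw [← hlg, toLex_ofLex]
          have hgt0 : toLex e < toLex (t - (m - e)) := by
            have h2 : m - e + (t - (m - e)) = t := add_tsub_cancel_of_le hdvd
            have h1 : m - e + e = m := tsub_add_cancel_of_le hle
            have h3 : toLex (m - e) + toLex e < toLex (m - e) + toLex (t - (m - e)) := by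
              show toLex ((m - e) + e) < toLex ((m - e) + (t - (m - e)))
              rw [h1, h2]; exact ht
            exact lt_of_add_lt_add_left h3
          have hgt : lmon n g < toLex (t - (m - e)) := by
            calc lmon n g = toLex e := hlm
            _ < _ := hgt0
          rw [coeff_zero_of_lmon_lt n hgt, mul_zero]
        · rfl
  obtain ⟨q, hhom, hspan, hcm, hctop⟩ := key
  set f' := f - q with hf'_def
  have hf'hom : f'.IsHomogeneous d := by
    have h1 : f ∈ homogeneousSubmodule _ ℂ d := (mem_homogeneousSubmodule _ _).2 hf
    have h2 : q ∈ homogeneousSubmodule _ ℂ d := (mem_homogeneousSubmodule _ _).2 hhom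
    exact (mem_homogeneousSubmodule _ _).1 (Submodule.sub_mem _ h1 h2)
  have hsupp : ∀ t ∈ f'.support, toLex t < toLex m := by
    intro t ht
    have hne : coeff t f' ≠ 0 := MvPolynomial.mem_support_iff.1 ht
    rcases lt_trichotomy (toLex t) (toLex m) with h | h | h
    · exact h
    · exfalso; apply hne
      have : t = m := toLex.injective h
      rw [hf'_def]; subst this; simp [coeff_sub, hcm]
    · exfalso; apply hne
      have h1 : coeff t f = 0 := coeff_zero_of_lmon_lt n (by rw [hm_def] at h; simpa using h)
      have h2 : coeff t q = 0 := hctop t h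
      rw [hf'_def]; simp [coeff_sub, h1, h2]
  have hf'span : (Ideal.Quotient.mkₐ ℂ I) f' ∈ Submodule.span ℂ
      ((fun m => (Ideal.Quotient.mkₐ ℂ I) (monomial m (1:ℂ))) '' (stdSet n I d : Set (Fin (n+1) →₀ ℕ))) := by
    by_cases hf'0 : f' = 0
    · rw [hf'0]; simp only [map_zero]; exact Submodule.zero_mem _
    · have hlt : lmon n f' < mb := by
        have h1 : ofLex (lmon n f') ∈ f'.support := lmon_mem n hf'0
        have h2 : toLex (ofLex (lmon n f')) < toLex m := hsupp _ h1
        calc lmon n f' = toLex (ofLex (lmon n f')) := rfl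
        _ < toLex m := h2
        _ ≤ mb := hbound m hm
      exact IH _ hlt f' hf'hom (fun t ht => le_lmon n ht)
  have : (Ideal.Quotient.mkₐ ℂ I) f = (Ideal.Quotient.mkₐ ℂ I) f' + (Ideal.Quotient.mkₐ ℂ I) q := by
    rw [hf'_def, map_sub]; ring
  rw [this]
  exact Submodule.add_mem _ hf'span hspan

lemma indep (d : ℕ) :
    LinearIndependent ℂ (fun m : (stdSet n I d : Finset (Fin (n+1) →₀ ℕ)) =>
      (Ideal.Quotient.mkₐ ℂ I) (monomial (m : Fin (n+1) →₀ ℕ) (1:ℂ))) := by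
  classical
  rw [linearIndependent_iff']
  intro s g hsum i hi
  by_contra hgi
  set q : MvPolynomial (Fin (n+1)) ℂ :=
    ∑ j ∈ s, monomial (j : Fin (n+1) →₀ ℕ) (g j) with hq_def
  have hcoeff : ∀ j : (stdSet n I d : Finset (Fin (n+1) →₀ ℕ)), j ∈ s →
      coeff (j : Fin (n+1) →₀ ℕ) q = g j := by
    intro j hj
    rw [hq_def, coeff_sum]
    rw [Finset.sum_eq_single j]
    · simp [coeff_monomial]
    · intro b hb hbj
      rw [coeff_monomial, if_neg]
      intro hEq
      exact hbj (Subtype.ext hEq)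
    · intro hns; exact absurd hj hns
  have hqI : q ∈ I := by
    have : (Ideal.Quotient.mkₐ ℂ I) q = 0 := by
      rw [hq_def, map_sum]
      rw [← hsum]
      apply Finset.sum_congr rfl
      intro j hj
      have : monomial (j : Fin (n+1) →₀ ℕ) (g j) = g j • monomial (j : Fin (n+1) →₀ ℕ) (1:ℂ) := by
        rw [smul_monomial, smul_eq_mul, mul_one]
      rw [this, map_smul]
    rwa [Ideal.Quotient.mkₐ_eq_mk, Ideal.Quotient.eq_zero_iff_mem] at this
  have hq0 : q ≠ 0 := by
    intro h0
    apply hgi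
    rw [← hcoeff i hi, h0, coeff_zero]
  have hqhom : q.IsHomogeneous d := by
    rw [← mem_homogeneousSubmodule]
    apply Submodule.sum_mem
    intro j hj
    rw [mem_homogeneousSubmodule]
    exact isHomogeneous_monomial _ (((mem_stdSet n I).1 j.2).1)
  have hlex : ofLex (lmon n q) ∈ LexpSet n I := ⟨q, hqI, hq0, ⟨d, hqhom⟩, rfl⟩
  have hsupp : ∀ t ∈ q.support, t ∈ stdSet n I d := by
    intro t ht
    have hct : coeff t q ≠ 0 := MvPolynomial.mem_support_iff.1 ht
    by_contra hns
    apply hct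
    rw [hq_def, coeff_sum]
    apply Finset.sum_eq_zero
    intro j hj
    rw [coeff_monomial, if_neg]
    intro hEq
    exact hns (hEq ▸ j.property)
  have hmem : ofLex (lmon n q) ∈ stdSet n I d := hsupp _ (lmon_mem n hq0)
  obtain ⟨-, hnd⟩ := (mem_stdSet n I).1 hmem
  exact hnd _ hlex le_rfl

theorem dim_eq (d : ℕ) : quotientComponentDim n I d = (stdSet n I d).card := by
  classical
  have himg : (homogeneousSubmodule (Fin (n + 1)) ℂ d).map (Ideal.Quotient.mkₐ ℂ I).toLinearMap
      = Submodule.span ℂ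
        ((fun m => (Ideal.Quotient.mkₐ ℂ I) (monomial m (1:ℂ))) '' (stdSet n I d : Set (Fin (n+1) →₀ ℕ))) := by
    apply le_antisymm
    · rintro x ⟨f, hf, rfl⟩
      exact span_step n I d (lmon n f) f ((mem_homogeneousSubmodule _ _).1 hf)
        (fun t ht => le_lmon n ht)
    · rw [Submodule.span_le]
      rintro x ⟨m, hm, rfl⟩
      exact ⟨monomial m (1:ℂ), (mem_homogeneousSubmodule _ _).2
        (isHomogeneous_monomial 1 (((mem_stdSet n I).1 hm).1)), rfl⟩
  rw [quotientComponentDim, himg]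
  have hrange : ((fun m => (Ideal.Quotient.mkₐ ℂ I) (monomial m (1:ℂ))) ''
      (stdSet n I d : Set (Fin (n+1) →₀ ℕ)))
      = Set.range (fun m : (stdSet n I d : Finset (Fin (n+1) →₀ ℕ)) =>
        (Ideal.Quotient.mkₐ ℂ I) (monomial (m : Fin (n+1) →₀ ℕ) (1:ℂ))) := by
    ext x
    simp only [Set.mem_image, Set.mem_range, Finset.mem_coe]
    constructor
    · rintro ⟨m, hm, rfl⟩; exact ⟨⟨m, hm⟩, rfl⟩
    · rintro ⟨⟨m, hm⟩, rfl⟩; exact ⟨m, hm, rfl⟩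
  rw [hrange, finrank_span_eq_card (indep n I d), Fintype.card_coe]

theorem exists_F : ∃ F : Finset (Fin (n+1) →₀ ℕ),
    (↑F ⊆ LexpSet n I) ∧ ∀ e ∈ LexpSet n I, ∃ f ∈ F, f ≤ e := by
  classical
  set J : Ideal (MvPolynomial (Fin (n+1)) ℂ) :=
    Ideal.span ((fun e => monomial e (1:ℂ)) '' LexpSet n I) with hJ
  have hfg : J.FG := (isNoetherian_def.1 inferInstance) J
  obtain ⟨G, hG⟩ := hfg
  -- for each g ∈ G, find finite subset of generators
  have hmem : ∀ g ∈ G, ∃ T : Finset (MvPolynomial (Fin (n+1)) ℂ),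
      (↑T ⊆ (fun e => monomial e (1:ℂ)) '' LexpSet n I) ∧
      (g : MvPolynomial (Fin (n+1)) ℂ) ∈ Ideal.span (T : Set (MvPolynomial (Fin (n+1)) ℂ)) := by
    intro g hg
    have : g ∈ J := by rw [← hG]; exact Ideal.subset_span hg
    rw [hJ] at this
    obtain ⟨T, hT1, hT2⟩ := Submodule.mem_span_finite_of_mem_span this
    exact ⟨T, hT1, hT2⟩
  choose T hT1 hT2 using hmem
  set Tall : Finset (MvPolynomial (Fin (n+1)) ℂ) := G.attach.biUnion (fun g => T g g.2) with hTall
  have hTsub : ↑Tall ⊆ (fun e => monomial e (1:ℂ)) '' LexpSet n I := by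
    intro t ht
    rw [hTall] at ht
    obtain ⟨g, -, hgt⟩ := Finset.mem_biUnion.1 ht
    exact hT1 g g.2 hgt
  -- J = span Tall
  have hJT : J ≤ Ideal.span (Tall : Set (MvPolynomial (Fin (n+1)) ℂ)) := by
    rw [← hG, Ideal.span_le]
    intro g hg
    have := hT2 g hg
    refine Ideal.span_mono ?_ this
    intro t ht
    rw [hTall]
    exact Finset.mem_coe.2 (Finset.mem_biUnion.2 ⟨⟨g, hg⟩, Finset.mem_attach _ _, ht⟩)
  -- extract exponents
  have hchoice : ∀ t ∈ Tall, ∃ e ∈ LexpSet n I, monomial e (1:ℂ) = t := by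
    intro t ht
    obtain ⟨e, he, hEq⟩ := hTsub ht
    exact ⟨e, he, hEq⟩
  choose ex hex1 hex2 using hchoice
  set F : Finset (Fin (n+1) →₀ ℕ) := Tall.attach.image (fun t => ex t.1 t.2) with hF
  refine ⟨F, ?_, fun e he => ?_⟩
  · intro x hx
    rw [hF] at hx
    obtain ⟨t, -, rfl⟩ := Finset.mem_image.1 hx
    exact hex1 t.1 t.2
  have hmon : monomial e (1:ℂ) ∈ J := Ideal.subset_span ⟨e, he, rfl⟩
  have h2 : monomial e (1:ℂ) ∈ Ideal.span ((fun s => monomial s (1:ℂ)) '' (F : Set (Fin (n+1) →₀ ℕ))) := by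
    apply hJT at hmon
    refine Ideal.span_mono ?_ hmon
    intro t ht
    have ht' : t ∈ Tall := ht
    refine ⟨ex t ht', ?_, hex2 t ht'⟩
    rw [hF]
    exact Finset.mem_coe.2 (Finset.mem_image.2 ⟨⟨t, ht'⟩, Finset.mem_attach _ _, rfl⟩)
  have h3 := mem_ideal_span_monomial_image.1 h2
  have h4 : e ∈ (monomial e (1:ℂ)).support := by
    rw [support_monomial, if_neg one_ne_zero]; exact Finset.mem_singleton_self e
  obtain ⟨f, hf, hfe⟩ := h3 e h4
  exact ⟨f, hf, hfe⟩

theorem quotientComponentDim_eq_cnt :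
    ∃ F : Finset (Fin (n+1) →₀ ℕ), ∀ d, quotientComponentDim n I d = cnt n F d := by
  classical
  obtain ⟨F, hFsub, hF⟩ := exists_F n I
  refine ⟨F, fun d => ?_⟩
  rw [dim_eq n I d, cnt]
  congr 1
  apply Finset.ext
  intro m
  rw [Finset.mem_filter, mem_stdSet]
  constructor
  · rintro ⟨h1, h2⟩
    exact ⟨(mem_deg n).2 h1, fun f hf => h2 f (hFsub hf)⟩
  · rintro ⟨h1, h2⟩
    refine ⟨(mem_deg n).1 h1, fun e he hle => ?_⟩
    obtain ⟨f, hf, hfe⟩ := hF e he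
    exact h2 f hf (le_trans hfe hle)

end HilbertAux

/-- Hilbert polynomial: for a homogeneous ideal `I` of `ℂ[x₀,…,xₙ]`, there is a polynomial
`P` with rational coefficients such that for all sufficiently large `d`, the dimension of the
degree-`d` component of `ℂ[x₀,…,xₙ]/I` equals `P(d)`. -/
theorem exists_hilbert_polynomial (n : ℕ) (I : Ideal (MvPolynomial (Fin (n + 1)) ℂ))
    (hI : ∀ f ∈ I, ∀ d : ℕ, homogeneousComponent d f ∈ I) :
    ∃ (P : Polynomial ℚ) (N : ℕ), ∀ d : ℕ, N ≤ d →
      (quotientComponentDim n I d : ℚ) = P.eval (d : ℚ) := by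
  classical
  obtain ⟨F, hdF⟩ := quotientComponentDim_eq_cnt n I
  obtain ⟨P, N, hP⟩ := cnt_evp n F
  exact ⟨P, N, fun d hd => by rw [hdF d]; exact hP d hd⟩
end

section
/- Let I be a homogeneous ideal of ℂ[x₀,…,xₙ], and for each d ∈ ℕ let a_d be the (finite) ℂ-dimension of the degree-d homogeneous component of ℂ[x₀,…,xₙ]/I. Then the formal power series f(t) = ∑_{d≥0} a_d t^d ∈ ℚ[[t]] becomes a polynomial after multiplication by (1−t)^{n+1}: there exists a polynomial g ∈ ℚ[t] such that (1−t)^{n+1} · f(t) = g(t) as formal power series. -/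
open MvPolynomial

section hcX
variable {σ : Type*} {R : Type*} [CommSemiring R]

lemma hc_X_mul (i : σ) (h : MvPolynomial σ R) (d : ℕ) :
    homogeneousComponent (d+1) (X i * h) = X i * homogeneousComponent d h := by
  conv_lhs => rw [← sum_homogeneousComponent h]
  rw [Finset.mul_sum, map_sum]
  have key : ∀ e : ℕ, homogeneousComponent (d+1) (X i * homogeneousComponent e h)
      = if d = e then X i * homogeneousComponent e h else 0 := by
    intro e
    have hmem : X i * homogeneousComponent e h ∈ homogeneousSubmodule σ R (e+1) := by
      rw [mem_homogeneousSubmodule]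
      simpa [add_comm] using (isHomogeneous_X R i).mul (homogeneousComponent_isHomogeneous e h)
    rw [homogeneousComponent_of_mem hmem]
    simp
  simp_rw [key]
  rw [Finset.sum_ite_eq]
  split_ifs with hd
  · rfl
  · rw [Finset.mem_range, not_lt] at hd
    rw [homogeneousComponent_eq_zero d h (Nat.lt_of_succ_le hd), mul_zero]

lemma hc_zero_X_mul (i : σ) (h : MvPolynomial σ R) :
    homogeneousComponent 0 (X i * h) = 0 := by
  rw [homogeneousComponent_zero]
  have : coeff 0 (X i * h) = 0 := by
    have := constantCoeff_X (R := R) i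
    calc coeff 0 (X i * h) = constantCoeff (X i * h) := rfl
    _ = 0 := by rw [map_mul, this, zero_mul]
  rw [this, map_zero]

end hcX

noncomputable section HS

abbrev MvS (m : ℕ) := MvPolynomial (Fin m) ℂ

abbrev Vh (m d : ℕ) : Submodule ℂ (MvS m) := homogeneousSubmodule (Fin m) ℂ d

instance Vh_fd (m d : ℕ) : FiniteDimensional ℂ (Vh m d) := by
  apply Submodule.finiteDimensional_of_le (S₂ := restrictTotalDegree (Fin m) ℂ d)
  intro p hp
  rw [mem_restrictTotalDegree]
  exact IsHomogeneous.totalDegree_le hp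

/-- the homogeneity predicate -/
def HomogI {m : ℕ} (I : Ideal (MvS m)) : Prop :=
  ∀ f ∈ I, ∀ d : ℕ, homogeneousComponent d f ∈ I

variable {m : ℕ}

lemma homogI_colon {I : Ideal (MvS m)} (hI : HomogI I) (i : Fin m) :
    HomogI (I.colon (Ideal.span {(X i : MvS m)})) := by
  intro f hf d
  rw [Ideal.mem_colon_span_singleton] at hf ⊢
  have : homogeneousComponent d f * X i = homogeneousComponent (d+1) (f * X i) := by
    rw [mul_comm f (X i), hc_X_mul, mul_comm]
  rw [this]
  exact hI _ hf _

lemma homogI_sup {I : Ideal (MvS m)} (hI : HomogI I) (i : Fin m) :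
    HomogI (I ⊔ Ideal.span {X i}) := by
  intro f hf d
  rw [Submodule.mem_sup] at hf
  obtain ⟨a, ha, b, hb, rfl⟩ := hf
  rw [Ideal.mem_span_singleton'] at hb
  obtain ⟨h, rfl⟩ := hb
  rw [map_add]
  refine Submodule.add_mem_sup (hI _ ha _) ?_
  rw [mul_comm h (X i)]
  cases d with
  | zero => rw [hc_zero_X_mul]; exact zero_mem _
  | succ d =>
      rw [hc_X_mul]
      rw [Ideal.mem_span_singleton']
      exact ⟨_, mul_comm _ _⟩

/-- multiplication by `X i` as a `ℂ`-linear map -/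
def mulX (m : ℕ) (i : Fin m) : MvS m →ₗ[ℂ] MvS m := LinearMap.mulLeft ℂ (X i)

lemma mulX_inj (i : Fin m) : Function.Injective (mulX m i) := by
  intro a b hab
  exact mul_left_cancel₀ (X_ne_zero i) hab

lemma finrank_map_mulX (i : Fin m) (W : Submodule ℂ (MvS m)) :
    Module.finrank ℂ (W.map (mulX m i)) = Module.finrank ℂ W :=
  (LinearEquiv.finrank_eq (Submodule.equivMapOfInjective _ (mulX_inj i) W)).symm

lemma mapX_le (i : Fin m) (d : ℕ) : (Vh m d).map (mulX m i) ≤ Vh m (d+1) := by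
  rintro _ ⟨h, hh, rfl⟩
  show X i * h ∈ homogeneousSubmodule (Fin m) ℂ (d+1)
  have := (isHomogeneous_X ℂ i).mul (show IsHomogeneous h d from hh)
  rw [mem_homogeneousSubmodule]
  simpa [add_comm] using this

lemma sup_inter {I : Ideal (MvS m)} (hI : HomogI I) (i : Fin m) (d : ℕ) :
    (I ⊔ Ideal.span {X i}).restrictScalars ℂ ⊓ Vh m (d+1)
      = (I.restrictScalars ℂ ⊓ Vh m (d+1)) ⊔ (Vh m d).map (mulX m i) := by
  apply le_antisymm
  · rintro f ⟨hfI, hfV⟩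
    replace hfI : f ∈ I ⊔ Ideal.span {X i} := hfI
    replace hfV : f ∈ homogeneousSubmodule (Fin m) ℂ (d+1) := hfV
    rw [Submodule.mem_sup] at hfI
    obtain ⟨a, ha, b, hb, rfl⟩ := hfI
    rw [Ideal.mem_span_singleton'] at hb
    obtain ⟨h, rfl⟩ := hb
    have hfc : homogeneousComponent (d+1) (a + h * X i) = a + h * X i :=
      by rw [homogeneousComponent_of_mem hfV, if_pos rfl]
    rw [← hfc, map_add]
    refine Submodule.add_mem_sup ⟨hI _ ha _, homogeneousComponent_mem _ _⟩ ?_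
    rw [mul_comm h (X i), hc_X_mul]
    exact ⟨_, homogeneousComponent_mem _ _, rfl⟩
  · refine sup_le (inf_le_inf_right _ ?_) (le_inf ?_ (mapX_le i d))
    · intro p hp
      rw [Submodule.restrictScalars_mem] at hp ⊢
      exact Ideal.mem_sup_left hp
    · rintro _ ⟨h, hh, rfl⟩
      rw [Submodule.restrictScalars_mem]
      apply Ideal.mem_sup_right
      rw [Ideal.mem_span_singleton']
      exact ⟨h, mul_comm _ _⟩

lemma inf_inter (I : Ideal (MvS m)) (i : Fin m) (d : ℕ) :
    (I.restrictScalars ℂ ⊓ Vh m (d+1)) ⊓ (Vh m d).map (mulX m i)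
      = ((I.colon (Ideal.span {(X i : MvS m)})).restrictScalars ℂ ⊓ Vh m d).map (mulX m i) := by
  apply le_antisymm
  · rintro f ⟨⟨hfI, -⟩, ⟨h, hh, rfl⟩⟩
    refine ⟨h, ⟨?_, hh⟩, rfl⟩
    show h ∈ I.colon (Ideal.span {(X i : MvS m)})
    rw [Ideal.mem_colon_span_singleton, mul_comm]
    exact hfI
  · rintro _ ⟨h, ⟨hcol, hh⟩, rfl⟩
    replace hcol : h ∈ I.colon (Ideal.span {(X i : MvS m)}) := hcol
    rw [Ideal.mem_colon_span_singleton] at hcol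
    refine ⟨⟨?_, mapX_le i d ⟨h, hh, rfl⟩⟩, ⟨h, hh, rfl⟩⟩
    show X i * h ∈ I
    rwa [mul_comm]

def hdim (m : ℕ) (I : Ideal (MvS m)) (d : ℕ) : ℕ :=
  Module.finrank ℂ ((Vh m d).map (Ideal.Quotient.mkₐ ℂ I).toLinearMap)

def bdim (m : ℕ) (I : Ideal (MvS m)) (d : ℕ) : ℕ :=
  Module.finrank ℂ (I.restrictScalars ℂ ⊓ Vh m d : Submodule ℂ (MvS m))

def cdim (m d : ℕ) : ℕ := Module.finrank ℂ (Vh m d)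

-- helper: rank-nullity for a map restricted to a finite-dimensional submodule
lemma finrank_map_add_inf_ker {A B : Type*} [AddCommGroup A] [Module ℂ A]
    [AddCommGroup B] [Module ℂ B] (W : Submodule ℂ A) [FiniteDimensional ℂ W]
    (f : A →ₗ[ℂ] B) :
    Module.finrank ℂ (W.map f) + Module.finrank ℂ (LinearMap.ker f ⊓ W : Submodule ℂ A)
      = Module.finrank ℂ W := by
  have h := LinearMap.finrank_range_add_finrank_ker (f.domRestrict W)
  rw [LinearMap.range_domRestrict] at h
  rw [← h]
  congr 1
  refine (LinearEquiv.finrank_eq ?_).symm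
  refine (LinearEquiv.ofEq _ (Submodule.comap W.subtype (LinearMap.ker f ⊓ W)) ?_).trans
    (Submodule.comapSubtypeEquivOfLe inf_le_right)
  ext x
  simp [LinearMap.mem_ker]

lemma hdim_add_bdim (m : ℕ) (I : Ideal (MvS m)) (d : ℕ) :
    hdim m I d + bdim m I d = cdim m d := by
  have hker : LinearMap.ker (Ideal.Quotient.mkₐ ℂ I).toLinearMap = I.restrictScalars ℂ := by
    ext x
    rw [LinearMap.mem_ker, Submodule.restrictScalars_mem, AlgHom.toLinearMap_apply,
      Ideal.Quotient.mkₐ_eq_mk, Ideal.Quotient.eq_zero_iff_mem]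
  have := finrank_map_add_inf_ker (Vh m d) (Ideal.Quotient.mkₐ ℂ I).toLinearMap
  rw [hker] at this
  exact this


lemma bdim_rel {I : Ideal (MvS m)} (hI : HomogI I) (i : Fin m) (d : ℕ) :
    bdim m (I ⊔ Ideal.span {X i}) (d+1) + bdim m (I.colon (Ideal.span {(X i : MvS m)})) d
      = bdim m I (d+1) + cdim m d := by
  haveI fd1 : FiniteDimensional ℂ (I.restrictScalars ℂ ⊓ Vh m (d+1) : Submodule ℂ (MvS m)) :=
    Submodule.finiteDimensional_of_le inf_le_right
  haveI fd2 : FiniteDimensional ℂ ((Vh m d).map (mulX m i)) :=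
    Submodule.finiteDimensional_of_le (mapX_le i d)
  have h := Submodule.finrank_sup_add_finrank_inf_eq
    (I.restrictScalars ℂ ⊓ Vh m (d+1)) ((Vh m d).map (mulX m i))
  rw [← sup_inter hI i d, inf_inter I i d] at h
  simp only [finrank_map_mulX] at h
  exact h

lemma hdim_succ {I : Ideal (MvS m)} (hI : HomogI I) (i : Fin m) (d : ℕ) :
    hdim m I (d+1)
      = hdim m (I.colon (Ideal.span {(X i : MvS m)})) d + hdim m (I ⊔ Ideal.span {X i}) (d+1) := by
  have h1 := hdim_add_bdim m I (d+1)
  have h2 := hdim_add_bdim m (I.colon (Ideal.span {(X i : MvS m)})) d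
  have h3 := hdim_add_bdim m (I ⊔ Ideal.span {X i}) (d+1)
  have h4 := bdim_rel hI i d
  omega

lemma hdim_zero_sup {I : Ideal (MvS m)} (hI : HomogI I) (i : Fin m) :
    hdim m I 0 = hdim m (I ⊔ Ideal.span {X i}) 0 := by
  have h1 := hdim_add_bdim m I 0
  have h3 := hdim_add_bdim m (I ⊔ Ideal.span {X i}) 0
  have heq : (I ⊔ Ideal.span {X i}).restrictScalars ℂ ⊓ Vh m 0
      = I.restrictScalars ℂ ⊓ Vh m 0 := by
    apply le_antisymm
    · rintro f ⟨hfI, hfV⟩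
      replace hfI : f ∈ I ⊔ Ideal.span {X i} := hfI
      replace hfV : f ∈ homogeneousSubmodule (Fin m) ℂ 0 := hfV
      rw [Submodule.mem_sup] at hfI
      obtain ⟨a, ha, b, hb, rfl⟩ := hfI
      rw [Ideal.mem_span_singleton'] at hb
      obtain ⟨h, rfl⟩ := hb
      have hfc : homogeneousComponent 0 (a + h * X i) = a + h * X i := by
        rw [homogeneousComponent_of_mem hfV, if_pos rfl]
      refine ⟨?_, hfV⟩
      show a + h * X i ∈ I
      rw [← hfc, map_add, mul_comm h (X i), hc_zero_X_mul, add_zero]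
      exact hI a ha 0
    · refine inf_le_inf_right _ ?_
      intro p hp
      exact Ideal.mem_sup_left hp
  have hb : bdim m (I ⊔ Ideal.span {X i}) 0 = bdim m I 0 := by
    unfold bdim; rw [heq]
  omega



def proj (n : ℕ) : MvS (n+1) →ₐ[ℂ] MvS n :=
  aeval (Fin.snoc (fun j : Fin n => X j) 0)

def incl (n : ℕ) : MvS n →ₐ[ℂ] MvS (n+1) := rename Fin.castSucc

lemma proj_hom (n e : ℕ) {p : MvS (n+1)} (hp : p ∈ homogeneousSubmodule (Fin (n+1)) ℂ e) :
    proj n p ∈ homogeneousSubmodule (Fin n) ℂ e := by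
  rw [mem_homogeneousSubmodule] at hp ⊢
  have hg : ∀ i : Fin (n+1), IsHomogeneous (Fin.snoc (α := fun _ => MvS n) (fun j : Fin n => X j) 0 i) 1 := by
    intro i
    induction i using Fin.lastCases with
    | last => rw [Fin.snoc_last]; exact isHomogeneous_zero _ _ 1
    | cast j => rw [Fin.snoc_castSucc]; exact isHomogeneous_X ℂ j
  simpa only [one_mul, proj] using hp.aeval _ hg

lemma incl_hom (n e : ℕ) {p : MvS n} (hp : p ∈ homogeneousSubmodule (Fin n) ℂ e) :
    incl n p ∈ homogeneousSubmodule (Fin (n+1)) ℂ e := by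
  rw [mem_homogeneousSubmodule] at hp ⊢
  exact IsHomogeneous.rename_isHomogeneous hp

lemma proj_incl (n : ℕ) (p : MvS n) : proj n (incl n p) = p := by
  show aeval _ (rename _ p) = p
  rw [aeval_rename]
  have : (Fin.snoc (fun j : Fin n => X j) 0 ∘ Fin.castSucc) = (X : Fin n → MvS n) := by
    funext j
    simp [Fin.snoc_castSucc]
  rw [this]
  exact aeval_X_left_apply p

lemma proj_surj (n : ℕ) : Function.Surjective (proj n) :=
  fun q => ⟨incl n q, proj_incl n q⟩

lemma sub_incl_proj_mem (n : ℕ) (p : MvS (n+1)) :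
    p - incl n (proj n p) ∈ Ideal.span {X (Fin.last n)} := by
  induction p using MvPolynomial.induction_on with
  | C a => simp [proj, incl, aeval_C, rename_C]
  | add p q hp hq =>
      rw [map_add, map_add, add_sub_add_comm]
      exact add_mem hp hq
  | mul_X p i hp =>
      rw [map_mul, map_mul]
      induction i using Fin.lastCases with
      | last =>
          have h0 : proj n (X (Fin.last n)) = 0 := by
            simp [proj, aeval_X, Fin.snoc_last]
          rw [h0, map_zero, mul_zero, sub_zero]
          exact Ideal.mul_mem_left _ _ (Ideal.subset_span rfl)
      | cast j =>
          have h1 : incl n (proj n (X (Fin.castSucc j))) = X (Fin.castSucc j) := by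
            simp [proj, incl, aeval_X, Fin.snoc_castSucc, rename_X]
          rw [h1]
          have h2 : p * X (Fin.castSucc j) - incl n (proj n p) * X (Fin.castSucc j)
              = (p - incl n (proj n p)) * X (Fin.castSucc j) := by ring
          rw [h2]
          exact Ideal.mul_mem_right _ _ hp

lemma ker_le_span (n : ℕ) :
    LinearMap.ker (proj n).toLinearMap
      ≤ (Ideal.span {X (Fin.last n)}).restrictScalars ℂ := by
  intro p hp
  rw [LinearMap.mem_ker, AlgHom.toLinearMap_apply] at hp
  have := sub_incl_proj_mem n p
  rwa [hp, map_zero, sub_zero] at this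

lemma hc_proj (n d : ℕ) (p : MvS (n+1)) :
    homogeneousComponent d (proj n p) = proj n (homogeneousComponent d p) := by
  have hsum : proj n p
      = ∑ e ∈ Finset.range (p.totalDegree + 1), proj n (homogeneousComponent e p) := by
    rw [← map_sum, sum_homogeneousComponent]
  rw [hsum, map_sum]
  have key : ∀ e : ℕ, homogeneousComponent d (proj n (homogeneousComponent e p))
      = if d = e then proj n (homogeneousComponent e p) else 0 := fun e =>
    homogeneousComponent_of_mem (proj_hom n e (homogeneousComponent_mem e p))
  simp_rw [key]
  rw [Finset.sum_ite_eq]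
  split_ifs with hd
  · rfl
  · rw [Finset.mem_range, not_lt] at hd
    rw [homogeneousComponent_eq_zero d p (Nat.lt_of_succ_le hd), map_zero]


lemma mapV_proj (n d : ℕ) :
    (Vh (n+1) d).map (proj n).toLinearMap = Vh n d := by
  apply le_antisymm
  · rintro _ ⟨p, hp, rfl⟩
    exact proj_hom n d hp
  · intro q hq
    exact ⟨incl n q, incl_hom n d hq, proj_incl n q⟩

lemma mapJ_proj {n : ℕ} {J : Ideal (MvS (n+1))} (hJ : HomogI J) (d : ℕ) :
    (J.restrictScalars ℂ ⊓ Vh (n+1) d).map (proj n).toLinearMap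
      = (J.map (proj n)).restrictScalars ℂ ⊓ Vh n d := by
  apply le_antisymm
  · rintro _ ⟨p, ⟨hpJ, hpV⟩, rfl⟩
    exact ⟨Ideal.mem_map_of_mem _ hpJ, proj_hom n d hpV⟩
  · rintro q ⟨hqJ, hqV⟩
    replace hqJ : q ∈ J.map (proj n) := hqJ
    replace hqV : q ∈ homogeneousSubmodule (Fin n) ℂ d := hqV
    rw [Ideal.mem_map_iff_of_surjective _ (proj_surj n)] at hqJ
    obtain ⟨p, hp, rfl⟩ := hqJ
    refine ⟨homogeneousComponent d p, ⟨hJ p hp d, homogeneousComponent_mem d p⟩, ?_⟩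
    show proj n (homogeneousComponent d p) = proj n p
    rw [← hc_proj]
    rw [homogeneousComponent_of_mem hqV, if_pos rfl]

lemma homogI_map {n : ℕ} {J : Ideal (MvS (n+1))} (hJ : HomogI J) :
    HomogI (J.map (proj n)) := by
  intro f hf d
  rw [Ideal.mem_map_iff_of_surjective _ (proj_surj n)] at hf
  obtain ⟨p, hp, rfl⟩ := hf
  rw [hc_proj]
  exact Ideal.mem_map_of_mem _ (hJ p hp d)

lemma hdim_transfer {n : ℕ} {J : Ideal (MvS (n+1))} (hJ : HomogI J)
    (hxJ : X (Fin.last n) ∈ J) (d : ℕ) :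
    hdim (n+1) J d = hdim n (J.map (proj n)) d := by
  have e1 := finrank_map_add_inf_ker (Vh (n+1) d) (proj n).toLinearMap
  haveI : FiniteDimensional ℂ (J.restrictScalars ℂ ⊓ Vh (n+1) d : Submodule ℂ (MvS (n+1))) :=
    Submodule.finiteDimensional_of_le inf_le_right
  have e2 := finrank_map_add_inf_ker (J.restrictScalars ℂ ⊓ Vh (n+1) d) (proj n).toLinearMap
  rw [mapV_proj] at e1
  rw [mapJ_proj hJ] at e2
  have hK : LinearMap.ker (proj n).toLinearMap ⊓ (J.restrictScalars ℂ ⊓ Vh (n+1) d)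
      = LinearMap.ker (proj n).toLinearMap ⊓ Vh (n+1) d := by
    apply le_antisymm
    · exact inf_le_inf_left _ inf_le_right
    · rintro p ⟨hk, hv⟩
      refine ⟨hk, ⟨?_, hv⟩⟩
      show p ∈ J
      have hsp : p ∈ Ideal.span {X (Fin.last n)} := ker_le_span n hk
      have : Ideal.span {X (Fin.last n)} ≤ J := by
        rw [Ideal.span_le, Set.singleton_subset_iff]
        exact hxJ
      exact this hsp
  rw [hK] at e2
  have h1 := hdim_add_bdim (n+1) J d
  have h2 := hdim_add_bdim n (J.map (proj n)) d
  simp only [hdim, bdim, cdim] at h1 h2 ⊢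
  omega


def Fser (m : ℕ) (I : Ideal (MvS m)) : PowerSeries ℚ :=
  PowerSeries.mk fun d => (hdim m I d : ℚ)

lemma Fser_rel {m : ℕ} {I : Ideal (MvS m)} (hI : HomogI I) (i : Fin m) :
    Fser m I = PowerSeries.X * Fser m (I.colon (Ideal.span {(X i : MvS m)}))
      + Fser m (I ⊔ Ideal.span {X i}) := by
  ext d
  rw [map_add]
  cases d with
  | zero =>
      rw [PowerSeries.coeff_zero_X_mul, zero_add]
      simp only [Fser, PowerSeries.coeff_mk]
      exact_mod_cast congrArg (Nat.cast (R := ℚ)) (hdim_zero_sup hI i)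
  | succ d =>
      rw [PowerSeries.coeff_succ_X_mul]
      simp only [Fser, PowerSeries.coeff_mk]
      exact_mod_cast congrArg (Nat.cast (R := ℚ)) (hdim_succ hI i d)

def chain (m : ℕ) (I : Ideal (MvS m)) (i : Fin m) : ℕ → Ideal (MvS m)
  | 0 => I
  | k+1 => (chain m I i k).colon (Ideal.span {(X i : MvS m)})

lemma chain_homog {m : ℕ} {I : Ideal (MvS m)} (hI : HomogI I) (i : Fin m) :
    ∀ k, HomogI (chain m I i k)
  | 0 => hI
  | k+1 => homogI_colon (chain_homog hI i k) i

lemma chain_mono (m : ℕ) (I : Ideal (MvS m)) (i : Fin m) : Monotone (chain m I i) := by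
  apply monotone_nat_of_le_succ
  intro k f hf
  show f ∈ (chain m I i k).colon (Ideal.span {(X i : MvS m)})
  rw [Ideal.mem_colon_span_singleton]
  exact Ideal.mul_mem_right _ _ hf

lemma chain_stab (m : ℕ) (I : Ideal (MvS m)) (i : Fin m) :
    ∃ M : ℕ, chain m I i (M+1) = chain m I i M := by
  obtain ⟨M, hM⟩ := monotone_stabilizes_iff_noetherian.mpr inferInstance
    ⟨chain m I i, chain_mono m I i⟩
  exact ⟨M, (hM (M+1) (Nat.le_succ M)).symm⟩

lemma Fser_telescope {m : ℕ} {I : Ideal (MvS m)} (hI : HomogI I) (i : Fin m) (k : ℕ) :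
    Fser m I = PowerSeries.X ^ k * Fser m (chain m I i k)
      + ∑ j ∈ Finset.range k,
          PowerSeries.X ^ j * Fser m (chain m I i j ⊔ Ideal.span {X i}) := by
  induction k with
  | zero => simp [chain]
  | succ k ih =>
      rw [ih, Fser_rel (chain_homog hI i k) i, Finset.sum_range_succ]
      show _ = PowerSeries.X ^ (k+1) * Fser m (chain m I i (k+1)) + _
      rw [show chain m I i (k+1) = (chain m I i k).colon (Ideal.span {(X i : MvS m)}) from rfl]
      ring

lemma hdim_zero_vars (I : Ideal (MvS 0)) (d : ℕ) : hdim 0 I (d+1) = 0 := by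
  have hV : Vh 0 (d+1) = ⊥ := by
    rw [eq_bot_iff]
    intro p hp
    replace hp : p ∈ homogeneousSubmodule (Fin 0) ℂ (d+1) := hp
    rw [mem_homogeneousSubmodule] at hp
    have hp0 : p = 0 := by
      ext u
      rw [coeff_zero]
      by_contra hc0
      have hw := hp hc0
      have hu : u = 0 := Finsupp.ext fun a => a.elim0
      rw [hu] at hw
      simp at hw
    rw [hp0]
    exact Submodule.zero_mem ⊥
  unfold hdim
  rw [show Vh 0 (d+1) = ⊥ from hV, Submodule.map_bot, finrank_bot]

lemma main_induction : ∀ (m : ℕ) (I : Ideal (MvS m)), HomogI I →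
    ∃ g : Polynomial ℚ, (1 - PowerSeries.X) ^ m * Fser m I = (g : PowerSeries ℚ) := by
  intro m
  induction m with
  | zero =>
      intro I _
      refine ⟨Polynomial.C ((hdim 0 I 0 : ℚ)), ?_⟩
      rw [pow_zero, one_mul]
      ext d
      rw [Polynomial.coeff_coe, Polynomial.coeff_C]
      cases d with
      | zero => simp [Fser]
      | succ d => simp [Fser, hdim_zero_vars]
  | succ n ih =>
      intro I hI
      obtain ⟨M, hM⟩ := chain_stab (n+1) I (Fin.last n)
      have hKhomog : ∀ j, HomogI (chain (n+1) I (Fin.last n) j ⊔ Ideal.span {X (Fin.last n)}) :=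
        fun j => homogI_sup (chain_homog hI (Fin.last n) j) (Fin.last n)
      have hxK : ∀ j, X (Fin.last n) ∈ chain (n+1) I (Fin.last n) j ⊔ Ideal.span {X (Fin.last n)} :=
        fun j => Ideal.mem_sup_right (Ideal.subset_span rfl)
      have key : ∀ j, ∃ g : Polynomial ℚ,
          (1 - PowerSeries.X) ^ n
            * Fser (n+1) (chain (n+1) I (Fin.last n) j ⊔ Ideal.span {X (Fin.last n)})
          = (g : PowerSeries ℚ) := by
        intro j
        have hEq : Fser (n+1) (chain (n+1) I (Fin.last n) j ⊔ Ideal.span {X (Fin.last n)})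
            = Fser n ((chain (n+1) I (Fin.last n) j ⊔ Ideal.span {X (Fin.last n)}).map (proj n)) := by
          ext d
          simp only [Fser, PowerSeries.coeff_mk]
          rw [hdim_transfer (hKhomog j) (hxK j) d]
        rw [hEq]
        exact ih _ (homogI_map (hKhomog j))
      choose g hg using key
      have hstab : (1 - PowerSeries.X) * Fser (n+1) (chain (n+1) I (Fin.last n) M)
          = Fser (n+1) (chain (n+1) I (Fin.last n) M ⊔ Ideal.span {X (Fin.last n)}) := by
        have h := Fser_rel (chain_homog hI (Fin.last n) M) (Fin.last n)
        have h2 : (chain (n+1) I (Fin.last n) M).colon (Ideal.span {(X (Fin.last n) : MvS (n+1))})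
            = chain (n+1) I (Fin.last n) M := hM
        rw [h2] at h
        linear_combination h
      refine ⟨Polynomial.X ^ M * g M
        + ∑ j ∈ Finset.range M, Polynomial.X ^ j * ((1 - Polynomial.X) * g j), ?_⟩
      have expand : (1 - PowerSeries.X) ^ (n+1) * Fser (n+1) I
          = PowerSeries.X ^ M * ((1 - PowerSeries.X) ^ n
              * ((1 - PowerSeries.X) * Fser (n+1) (chain (n+1) I (Fin.last n) M)))
            + ∑ j ∈ Finset.range M, PowerSeries.X ^ j
              * ((1 - PowerSeries.X) * ((1 - PowerSeries.X) ^ n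
                  * Fser (n+1) (chain (n+1) I (Fin.last n) j ⊔ Ideal.span {X (Fin.last n)}))) := by
        rw [Fser_telescope hI (Fin.last n) M, mul_add, Finset.mul_sum]
        congr 1
        · ring
        · exact Finset.sum_congr rfl fun j _ => by ring
      rw [expand, hstab, hg M]
      have hsum : ∀ j ∈ Finset.range M, PowerSeries.X ^ j
            * ((1 - PowerSeries.X) * ((1 - PowerSeries.X) ^ n
                * Fser (n+1) (chain (n+1) I (Fin.last n) j ⊔ Ideal.span {X (Fin.last n)})))
          = PowerSeries.X ^ j * ((1 - PowerSeries.X) * ((g j : Polynomial ℚ) : PowerSeries ℚ)) := by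
        intro j _
        rw [hg j]
      rw [Finset.sum_congr rfl hsum]
      simp only [Polynomial.coe_add, Polynomial.coe_mul, Polynomial.coe_pow, Polynomial.coe_X,
        Polynomial.coe_one, Polynomial.coe_sub]
      congr 1
      rw [← Polynomial.coeToPowerSeries.ringHom_apply, map_sum]
      simp only [Polynomial.coeToPowerSeries.ringHom_apply, Polynomial.coe_mul,
        Polynomial.coe_pow, Polynomial.coe_X, Polynomial.coe_sub, Polynomial.coe_one]

end HS

/-- For a homogeneous ideal `I` of `ℂ[x₀,…,xₙ]`, the Hilbert series
`f(t) = ∑_{d≥0} a_d t^d ∈ ℚ[[t]]` becomes a polynomial after multiplying by `(1-t)^{n+1}`. -/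
theorem hilbert_series_rational (n : ℕ) (I : Ideal (MvPolynomial (Fin (n + 1)) ℂ))
    (hI : ∀ f ∈ I, ∀ d : ℕ, homogeneousComponent d f ∈ I) :
    ∃ g : Polynomial ℚ,
      (1 - PowerSeries.X) ^ (n + 1) *
          PowerSeries.mk (fun d : ℕ => (quotientComponentDim n I d : ℚ)) =
        (g : PowerSeries ℚ) := by
  obtain ⟨g, hg⟩ := main_induction (n+1) I hI
  exact ⟨g, hg⟩
end

section
/- Let f₁, f₂ ∈ ℂ[x₀,x₁,x₂] be nonzero homogeneous polynomials of degrees d₁ and d₂ respectively, having no common irreducible factor (every common divisor of f₁ and f₂ is a unit). Then for all sufficiently large k, the ℂ-dimension of the degree-k homogeneous component of the graded quotient ring ℂ[x₀,x₁,x₂]/(f₁,f₂) equals d₁·d₂. -/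
set_option synthInstance.maxHeartbeats 1000000
set_option maxHeartbeats 1000000

open MvPolynomial Finset

section Auxiliary

/-- Counting: the number of monomials of degree `m` in 3 variables. -/
lemma card_deg_set_aux (m : ℕ) :
    2 * (Finset.finsuppAntidiag (Finset.univ : Finset (Fin 3)) m).card = (m+1)*(m+2) := by
  have h : (Finset.finsuppAntidiag (Finset.univ : Finset (Fin 3)) m).card
      = ((range (m+1)).sigma (fun a => range (m+1-a))).card := by
    apply Finset.card_nbij' (i := fun d => ⟨d 0, d 1⟩)
      (j := fun p => Finsupp.equivFunOnFinite.symm ![p.1, p.2, m - p.1 - p.2])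
    · intro d hd
      simp only [Finset.mem_coe, Finset.mem_finsuppAntidiag] at hd
      have h3 : d 0 + d 1 + d 2 = m := by
        have := hd.1
        simpa [Fin.sum_univ_three] using this
      simp only [Finset.mem_coe, Finset.mem_sigma, Finset.mem_range]
      omega
    · intro p hp
      simp only [Finset.mem_coe, Finset.mem_sigma, Finset.mem_range] at hp
      simp only [Finset.mem_coe, Finset.mem_finsuppAntidiag]
      constructor
      · rw [Fin.sum_univ_three]
        simp [Finsupp.coe_equivFunOnFinite_symm]
        omega
      · exact Finset.subset_univ _
    · intro d hd
      simp only [Finset.mem_coe, Finset.mem_finsuppAntidiag] at hd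
      have h3 : d 0 + d 1 + d 2 = m := by simpa [Fin.sum_univ_three] using hd.1
      ext x
      fin_cases x <;> simp [Finsupp.coe_equivFunOnFinite_symm] <;> omega
    · intro p hp
      simp only [Finset.mem_coe, Finset.mem_sigma, Finset.mem_range] at hp
      simp [Finsupp.coe_equivFunOnFinite_symm]
  rw [h, Finset.card_sigma]
  simp only [Finset.card_range]
  have hrefl : ∑ a ∈ range (m+1), (m+1-a) = ∑ a ∈ range (m+1), (a+1) := by
    rw [← Finset.sum_range_reflect]
    apply Finset.sum_congr rfl
    intro x hx
    simp only [Finset.mem_range] at hx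
    omega
  have h2 := Finset.sum_range_id_mul_two (m+1)
  simp only [Nat.add_sub_cancel] at h2
  have h3 : (m+1)*(m+2) = (m+1)*m + 2*(m+1) := by ring
  rw [hrefl, Finset.sum_add_distrib, Finset.sum_const, Finset.card_range, smul_eq_mul,
    mul_one, h3, ← h2]
  ring

lemma degset_eq_aux (m : ℕ) :
    {d : Fin 3 →₀ ℕ | d.degree = m}
      = ↑(Finset.finsuppAntidiag (Finset.univ : Finset (Fin 3)) m) := by
  ext d
  simp only [Set.mem_setOf_eq, Finset.mem_coe, Finset.mem_finsuppAntidiag,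
    Finset.subset_univ, and_true]
  rw [Finsupp.degree_apply]
  rw [Finset.sum_subset (Finset.subset_univ _) (fun i _ hi => Finsupp.notMem_support_iff.mp hi)]

/-- The degree-`m` homogeneous component as a `ℂ`-vector space of finsupps. -/
noncomputable def homogEquivAux (m : ℕ) :
    (homogeneousSubmodule (Fin 3) ℂ m) ≃ₗ[ℂ]
      ((Finset.finsuppAntidiag (Finset.univ : Finset (Fin 3)) m : Set (Fin 3 →₀ ℕ)) →₀ ℂ) := by
  rw [homogeneousSubmodule_eq_finsupp_supported, degset_eq_aux]
  exact AddMonoidAlgebra.supportedEquivFinsupp _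

instance homogFDAux (m : ℕ) : FiniteDimensional ℂ (homogeneousSubmodule (Fin 3) ℂ m) :=
  Module.Finite.equiv (homogEquivAux m).symm

lemma finrank_homog_aux (m : ℕ) :
    2 * Module.finrank ℂ (homogeneousSubmodule (Fin 3) ℂ m) = (m+1)*(m+2) := by
  rw [(homogEquivAux m).finrank_eq, Module.finrank_finsupp_self]
  have hc : Fintype.card
      ((Finset.finsuppAntidiag (Finset.univ : Finset (Fin 3)) m : Set (Fin 3 →₀ ℕ)))
      = (Finset.finsuppAntidiag (Finset.univ : Finset (Fin 3)) m).card := by simp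
  rw [hc]
  exact card_deg_set_aux m

/-- Homogeneous component of a product with a homogeneous polynomial. -/
lemma hc_mul_aux {p f : MvPolynomial (Fin 3) ℂ} {d : ℕ} (hf : f.IsHomogeneous d) (n : ℕ) :
    homogeneousComponent (n + d) (p * f) = homogeneousComponent n p * f := by
  conv_lhs => rw [← sum_homogeneousComponent p]
  rw [Finset.sum_mul, map_sum, Finset.sum_eq_single n]
  · rw [homogeneousComponent_of_mem
      (((homogeneousComponent_isHomogeneous n p).mul hf : _)), if_pos rfl]
  · intro i _ hi
    rw [homogeneousComponent_of_mem (((homogeneousComponent_isHomogeneous i p).mul hf : _)),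
      if_neg (by omega)]
  · intro hn
    rw [Finset.mem_range, not_lt] at hn
    rw [homogeneousComponent_eq_zero n p (by omega), zero_mul, map_zero]

/-- `f` times the degree-`m` homogeneous component, as a `ℂ`-submodule. -/
noncomputable abbrev MfAux (f : MvPolynomial (Fin 3) ℂ) (m : ℕ) :
    Submodule ℂ (MvPolynomial (Fin 3) ℂ) :=
  (homogeneousSubmodule (Fin 3) ℂ m).map (LinearMap.mulLeft ℂ f)

lemma mem_MfAux {f x : MvPolynomial (Fin 3) ℂ} {m : ℕ} :
    x ∈ MfAux f m ↔ ∃ g, g.IsHomogeneous m ∧ f * g = x := by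
  simp only [Submodule.mem_map, mem_homogeneousSubmodule, LinearMap.mulLeft_apply]

lemma spanEq_aux {f₁ f₂ : MvPolynomial (Fin 3) ℂ} {d₁ d₂ k : ℕ}
    (hd₁ : f₁.IsHomogeneous d₁) (hd₂ : f₂.IsHomogeneous d₂) (hk₁ : d₁ ≤ k) (hk₂ : d₂ ≤ k) :
    (homogeneousSubmodule (Fin 3) ℂ k) ⊓ (Ideal.span {f₁, f₂}).restrictScalars ℂ
      = MfAux f₁ (k - d₁) ⊔ MfAux f₂ (k - d₂) := by
  apply le_antisymm
  · intro x hx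
    obtain ⟨hx1, hx2⟩ := Submodule.mem_inf.mp hx
    rw [Submodule.restrictScalars_mem] at hx2
    obtain ⟨a, b, hab⟩ := Ideal.mem_span_pair.mp hx2
    rw [mem_homogeneousSubmodule] at hx1
    have hx : homogeneousComponent k x = x := by
      rw [homogeneousComponent_of_mem hx1, if_pos rfl]
    have e1 : k - d₁ + d₁ = k := by omega
    have e2 : k - d₂ + d₂ = k := by omega
    have ha := hc_mul_aux (p := a) hd₁ (k - d₁)
    rw [e1] at ha
    have hb := hc_mul_aux (p := b) hd₂ (k - d₂)
    rw [e2] at hb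
    have : x = homogeneousComponent (k - d₁) a * f₁ + homogeneousComponent (k - d₂) b * f₂ := by
      rw [← hx]
      nth_rewrite 1 [← hab]
      rw [map_add, ha, hb]
    rw [this]
    exact Submodule.add_mem_sup
      (mem_MfAux.mpr ⟨_, homogeneousComponent_isHomogeneous _ _, mul_comm _ _⟩)
      (mem_MfAux.mpr ⟨_, homogeneousComponent_isHomogeneous _ _, mul_comm _ _⟩)
  · apply sup_le
    · rintro x hx
      obtain ⟨g, hg, rfl⟩ := mem_MfAux.mp hx
      refine Submodule.mem_inf.mpr ⟨?_, ?_⟩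
      · rw [mem_homogeneousSubmodule]
        have := hd₁.mul hg
        rwa [Nat.add_sub_cancel' hk₁] at this
      · rw [Submodule.restrictScalars_mem]
        exact Ideal.mul_mem_right _ _ (Ideal.subset_span (by simp))
    · rintro x hx
      obtain ⟨g, hg, rfl⟩ := mem_MfAux.mp hx
      refine Submodule.mem_inf.mpr ⟨?_, ?_⟩
      · rw [mem_homogeneousSubmodule]
        have := hd₂.mul hg
        rwa [Nat.add_sub_cancel' hk₂] at this
      · rw [Submodule.restrictScalars_mem]
        exact Ideal.mul_mem_right _ _ (Ideal.subset_span (by simp))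

lemma infEq_aux {f₁ f₂ : MvPolynomial (Fin 3) ℂ} {d₁ d₂ k : ℕ}
    (hd₁ : f₁.IsHomogeneous d₁) (hd₂ : f₂.IsHomogeneous d₂) (hk : d₁ + d₂ ≤ k)
    (hcop : ∀ p : MvPolynomial (Fin 3) ℂ, p ∣ f₁ → p ∣ f₂ → IsUnit p) :
    MfAux f₁ (k - d₁) ⊓ MfAux f₂ (k - d₂) = MfAux (f₁ * f₂) (k - d₁ - d₂) := by
  apply le_antisymm
  · intro x hx
    obtain ⟨hx1, hx2⟩ := Submodule.mem_inf.mp hx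
    obtain ⟨g, hg, rfl⟩ := mem_MfAux.mp hx1
    obtain ⟨h, hh, hfh⟩ := mem_MfAux.mp hx2
    have hrp : IsRelPrime f₂ f₁ := fun p hp1 hp2 => hcop p hp2 hp1
    have hdvd : f₂ ∣ g := hrp.dvd_of_dvd_mul_left ⟨h, hfh.symm⟩
    obtain ⟨q, rfl⟩ := hdvd
    have e1 : k - d₁ - d₂ + d₂ = k - d₁ := by omega
    have hgq : f₂ * q = homogeneousComponent (k - d₁ - d₂) q * f₂ := by
      have h2 : homogeneousComponent (k - d₁) (f₂ * q) = f₂ * q := by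
        rw [homogeneousComponent_of_mem hg, if_pos rfl]
      have h3 := hc_mul_aux (p := q) hd₂ (k - d₁ - d₂)
      rw [e1, mul_comm q f₂, h2] at h3
      exact h3
    refine mem_MfAux.mpr ⟨homogeneousComponent (k - d₁ - d₂) q,
      homogeneousComponent_isHomogeneous _ _, ?_⟩
    rw [hgq]; ring
  · intro x hx
    obtain ⟨q, hq, rfl⟩ := mem_MfAux.mp hx
    refine Submodule.mem_inf.mpr ⟨?_, ?_⟩
    · refine mem_MfAux.mpr ⟨f₂ * q, ?_, by ring⟩
      have := hd₂.mul hq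
      rwa [show d₂ + (k - d₁ - d₂) = k - d₁ by omega] at this
    · refine mem_MfAux.mpr ⟨f₁ * q, ?_, by ring⟩
      have := hd₁.mul hq
      rwa [show d₁ + (k - d₁ - d₂) = k - d₂ by omega] at this

lemma finrank_MfAux {f : MvPolynomial (Fin 3) ℂ} (hf : f ≠ 0) (m : ℕ) :
    Module.finrank ℂ (MfAux f m) = Module.finrank ℂ (homogeneousSubmodule (Fin 3) ℂ m) :=
  (LinearEquiv.finrank_eq (Submodule.equivMapOfInjective _
    (mul_right_injective₀ (M₀ := MvPolynomial (Fin 3) ℂ) hf) _)).symm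

lemma rank_nullity_aux (k : ℕ) (I : Ideal (MvPolynomial (Fin 3) ℂ)) :
    Module.finrank ℂ ((homogeneousSubmodule (Fin 3) ℂ k).map (Ideal.Quotient.mkₐ ℂ I).toLinearMap)
      + Module.finrank ℂ
        ((homogeneousSubmodule (Fin 3) ℂ k) ⊓ I.restrictScalars ℂ : Submodule ℂ _)
      = Module.finrank ℂ (homogeneousSubmodule (Fin 3) ℂ k) := by
  set S := homogeneousSubmodule (Fin 3) ℂ k
  set q := (Ideal.Quotient.mkₐ ℂ I).toLinearMap
  set φ := q.comp S.subtype with hφ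
  have hker : LinearMap.ker q = I.restrictScalars ℂ := by
    ext x
    rw [LinearMap.mem_ker, Submodule.restrictScalars_mem]
    show Ideal.Quotient.mk I x = 0 ↔ _
    exact Ideal.Quotient.eq_zero_iff_mem
  have hrange : LinearMap.range φ = S.map q := by
    rw [hφ, LinearMap.range_comp, Submodule.range_subtype]
  have hkerφ : LinearMap.ker φ = Submodule.comap S.subtype (S ⊓ I.restrictScalars ℂ) := by
    rw [hφ, LinearMap.ker_comp, hker, Submodule.comap_inf, Submodule.comap_subtype_self, top_inf_eq]
  have h1 := LinearMap.finrank_range_add_finrank_ker φ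
  rw [hrange, hkerφ] at h1
  rw [← h1]
  congr 1
  exact (LinearEquiv.finrank_eq
    (Submodule.comapSubtypeEquivOfLe (inf_le_left : S ⊓ I.restrictScalars ℂ ≤ S))).symm

end Auxiliary

/-- For homogeneous `f₁, f₂ ∈ ℂ[x₀,x₁,x₂]` of degrees `d₁, d₂` without common irreducible
factor, the dimension of the degree-`k` component of `ℂ[x₀,x₁,x₂]/(f₁,f₂)` equals `d₁·d₂`
for all sufficiently large `k`. -/
theorem hilbert_polynomial_of_two_curves (f₁ f₂ : MvPolynomial (Fin 3) ℂ) (d₁ d₂ : ℕ)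
    (hf₁ : f₁ ≠ 0) (hf₂ : f₂ ≠ 0)
    (hd₁ : f₁.IsHomogeneous d₁) (hd₂ : f₂.IsHomogeneous d₂)
    (hcoprime : ∀ p : MvPolynomial (Fin 3) ℂ, p ∣ f₁ → p ∣ f₂ → IsUnit p) :
    ∃ N : ℕ, ∀ k : ℕ, N ≤ k →
      Module.finrank ℂ
          ((homogeneousSubmodule (Fin 3) ℂ k).map
            (Ideal.Quotient.mkₐ ℂ (Ideal.span {f₁, f₂})).toLinearMap) = d₁ * d₂ := by
  refine ⟨d₁ + d₂, fun k hk => ?_⟩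
  set I : Ideal (MvPolynomial (Fin 3) ℂ) := Ideal.span {f₁, f₂} with hI
  -- rank-nullity
  have hrn := rank_nullity_aux k I
  -- decomposition of the degree-k part of the ideal
  have hspan := spanEq_aux hd₁ hd₂ (by omega : d₁ ≤ k) (by omega : d₂ ≤ k)
  have hinf := infEq_aux hd₁ hd₂ hk hcoprime
  -- finite dimensionality
  haveI hA : FiniteDimensional ℂ (MfAux f₁ (k - d₁)) := inferInstance
  haveI hB : FiniteDimensional ℂ (MfAux f₂ (k - d₂)) := inferInstance
  have hsup := Submodule.finrank_sup_add_finrank_inf_eq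
    (MfAux f₁ (k - d₁)) (MfAux f₂ (k - d₂))
  rw [hinf] at hsup
  rw [← hI] at hspan
  rw [hspan] at hrn
  rw [finrank_MfAux hf₁, finrank_MfAux hf₂, finrank_MfAux (mul_ne_zero hf₁ hf₂)] at hsup
  -- numerical values
  obtain ⟨j, rfl⟩ : ∃ j, k = d₁ + d₂ + j := ⟨k - d₁ - d₂, by omega⟩
  have r1 : d₁ + d₂ + j - d₁ = d₂ + j := by omega
  have r2 : d₁ + d₂ + j - d₂ = d₁ + j := by omega
  have r3 : d₁ + d₂ + j - d₁ - d₂ = j := by omega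
  rw [r3] at hsup
  rw [r1, r2] at hsup hrn
  have e1 := finrank_homog_aux (d₁ + d₂ + j)
  have e2 := finrank_homog_aux (d₂ + j)
  have e3 := finrank_homog_aux (d₁ + j)
  have e4 := finrank_homog_aux j
  have key : (d₁+d₂+j+1)*(d₁+d₂+j+2) + (j+1)*(j+2)
      = 2*(d₁*d₂) + ((d₂+j+1)*(d₂+j+2) + (d₁+j+1)*(d₁+j+2)) := by ring
  omega
end

section
/- For every z ∈ ℂ with z ∉ L, the family indexed by the nonzero elements l of L with terms 1/(z−l)² − 1/l² is summable in ℂ (the defining series of the Weierstrass function converges absolutely). -/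
/-- The lattice `L = ℤγ₁ + ℤγ₂ ⊆ ℂ`. -/
def latticeSet (γ₁ γ₂ : ℂ) : Set ℂ := {z : ℂ | ∃ m n : ℤ, z = m * γ₁ + n * γ₂}

section aux

variable {γ₁ γ₂ : ℂ}

/-- Real-linear independence of the periods. -/
lemma lattice_indep (hγ₁ : γ₁ ≠ 0) (hγ : γ₂ / γ₁ ∉ (Set.range ((↑) : ℝ → ℂ)))
    {a b : ℝ} (h : (a : ℂ) * γ₁ + (b : ℂ) * γ₂ = 0) : a = 0 ∧ b = 0 := by
  have hγ₂ : γ₂ ≠ 0 := by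
    rintro rfl
    exact hγ ⟨0, by simp⟩
  have hb : b = 0 := by
    by_contra hb
    apply hγ
    refine ⟨-(a / b), ?_⟩
    have hbc : (b : ℂ) ≠ 0 := by exact_mod_cast hb
    field_simp at h ⊢
    push_cast; field_simp; linear_combination -h
  subst hb
  simp only [Complex.ofReal_zero, zero_mul, add_zero, mul_eq_zero] at h
  rcases h with h | h
  · exact ⟨by exact_mod_cast h, rfl⟩
  · exact absurd h hγ₁

/-- The linear map `ℝ × ℝ → ℂ` with matrix columns `γ₁, γ₂`. -/
noncomputable def latticeMap (γ₁ γ₂ : ℂ) : (ℝ × ℝ) →ₗ[ℝ] ℂ where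
  toFun p := (p.1 : ℂ) * γ₁ + (p.2 : ℂ) * γ₂
  map_add' p q := by simp only [Prod.fst_add, Prod.snd_add]; push_cast; ring
  map_smul' c p := by
    simp only [Prod.smul_fst, Prod.smul_snd, smul_eq_mul, RingHom.id_apply,
      Complex.real_smul]
    push_cast; ring

lemma latticeMap_injective (hγ₁ : γ₁ ≠ 0) (hγ : γ₂ / γ₁ ∉ (Set.range ((↑) : ℝ → ℂ))) :
    Function.Injective (latticeMap γ₁ γ₂) := by
  rw [injective_iff_map_eq_zero]
  rintro ⟨a, b⟩ h
  have h' : (a : ℂ) * γ₁ + (b : ℂ) * γ₂ = 0 := h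
  obtain ⟨ha, hb⟩ := lattice_indep hγ₁ hγ h'
  simp [Prod.ext_iff, ha, hb]

/-- Lower bound: `‖p‖ ≲ ‖latticeMap p‖`. -/
lemma latticeMap_lower (hγ₁ : γ₁ ≠ 0) (hγ : γ₂ / γ₁ ∉ (Set.range ((↑) : ℝ → ℂ))) :
    ∃ c : ℝ, 0 < c ∧ ∀ p : ℝ × ℝ, c * ‖p‖ ≤ ‖latticeMap γ₁ γ₂ p‖ := by
  have hinj := latticeMap_injective hγ₁ hγ
  have hrank : Module.finrank ℝ (ℝ × ℝ) = Module.finrank ℝ ℂ := by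
    simp [Complex.finrank_real_complex]
  let e := (LinearMap.linearEquivOfInjective (latticeMap γ₁ γ₂) hinj hrank).toContinuousLinearEquiv
  obtain ⟨K, hK⟩ : ∃ K : NNReal, AntilipschitzWith K e := ⟨_, e.antilipschitz⟩
  refine ⟨(max K 1 : NNReal)⁻¹, by positivity, fun p => ?_⟩
  have h1 : ‖p‖ ≤ (K : ℝ) * ‖e p‖ := by
    simpa [dist_eq_norm] using hK.le_mul_dist p 0
  have h2 : (K : ℝ) ≤ (max K 1 : NNReal) := by exact_mod_cast le_max_left K 1
  have hmax : (0:ℝ) < (max K 1 : NNReal) := by positivity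
  have he : (e p : ℂ) = latticeMap γ₁ γ₂ p := rfl
  rw [inv_mul_le_iff₀ hmax, ← he]
  calc ‖p‖ ≤ (K : ℝ) * ‖e p‖ := h1
    _ ≤ (max K 1 : NNReal) * ‖e p‖ := by
        exact mul_le_mul_of_nonneg_right h2 (norm_nonneg _)

end aux

/-- The defining series of the Weierstrass ℘-function converges absolutely: for `z ∉ L`,
the family `1/(z−l)² − 1/l²` indexed by the nonzero lattice points `l` is summable. -/
theorem weierstrass_series_summable (γ₁ γ₂ : ℂ) (hγ₁ : γ₁ ≠ 0)
    (hγ : γ₂ / γ₁ ∉ (Set.range ((↑) : ℝ → ℂ)))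
    (z : ℂ) (hz : z ∉ latticeSet γ₁ γ₂) :
    Summable (fun l : {l : ℂ // l ∈ latticeSet γ₁ γ₂ ∧ l ≠ 0} =>
      1 / (z - (l : ℂ)) ^ 2 - 1 / (l : ℂ) ^ 2) := by
  classical
  -- the map from integer pairs to lattice points
  set φ : ℤ × ℤ → ℂ := fun p => (p.1 : ℂ) * γ₁ + (p.2 : ℂ) * γ₂ with hφ
  have hφT : ∀ p : ℤ × ℤ, φ p = latticeMap γ₁ γ₂ ((p.1 : ℝ), (p.2 : ℝ)) := by
    intro p; simp [hφ, latticeMap]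
  have hφinj : Function.Injective φ := by
    intro p q h
    rw [hφT, hφT] at h
    have h2 := latticeMap_injective hγ₁ hγ h
    rw [Prod.mk.injEq] at h2
    exact Prod.ext (by exact_mod_cast h2.1) (by exact_mod_cast h2.2)
  have hφ0 : φ 0 = 0 := by simp [hφ]
  -- the equivalence between nonzero integer pairs and nonzero lattice points
  have hmem : ∀ p : ℤ × ℤ, φ p ∈ latticeSet γ₁ γ₂ := fun p => ⟨p.1, p.2, rfl⟩
  let g : {p : ℤ × ℤ // p ≠ 0} → {l : ℂ // l ∈ latticeSet γ₁ γ₂ ∧ l ≠ 0} :=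
    fun p => ⟨φ p.1, hmem p.1, fun h => p.2 (hφinj (h.trans hφ0.symm))⟩
  have hbij : Function.Bijective g := by
    constructor
    · intro p q h
      exact Subtype.ext (hφinj (congrArg Subtype.val h))
    · rintro ⟨l, ⟨m, n, hl⟩, hne⟩
      refine ⟨⟨(m, n), fun h0 => hne ?_⟩, Subtype.ext hl.symm⟩
      rw [Prod.mk.injEq] at h0
      rw [hl, h0.1, h0.2]
      simp
  let e := Equiv.ofBijective g hbij
  rw [← e.summable_iff]
  -- it suffices to sum over all integer pairs
  have key : Summable (fun p : ℤ × ℤ => 1 / (z - φ p) ^ 2 - 1 / (φ p) ^ 2) := by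
    obtain ⟨c, hc, hlow⟩ := latticeMap_lower hγ₁ hγ
    -- lower bound on the lattice norm in terms of the pair
    have hnorm : ∀ p : ℤ × ℤ, c * ‖p‖ ≤ ‖φ p‖ := by
      intro p
      have h := hlow ((p.1 : ℝ), (p.2 : ℝ))
      rw [← hφT] at h
      have hn : ‖((p.1 : ℝ), (p.2 : ℝ))‖ = ‖p‖ := by
        simp [Prod.norm_def, Int.norm_eq_abs, Real.norm_eq_abs]
      rwa [hn] at h
    -- ‖φ p‖ → ∞ cofinitely
    have htend : Filter.Tendsto (fun p : ℤ × ℤ => ‖φ p‖) Filter.cofinite Filter.atTop := by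
      apply Filter.tendsto_atTop_mono hnorm
      apply Filter.Tendsto.const_mul_atTop hc
      rw [← Filter.cocompact_eq_cofinite (ℤ × ℤ)]
      exact tendsto_norm_cocompact_atTop
    -- comparison sum
    have hsum : Summable (fun p : ℤ × ℤ =>
        (12 * ‖z‖ / c ^ 3) * ‖(finTwoArrowEquiv ℤ).symm p‖ ^ (-(3:ℝ))) := by
      apply Summable.mul_left
      exact ((finTwoArrowEquiv ℤ).symm.summable_iff (f := fun x : Fin 2 → ℤ => ‖x‖ ^ (-(3:ℝ)))).mpr
        (EisensteinSeries.summable_one_div_norm_rpow (by norm_num))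
    apply Summable.of_norm_bounded_eventually hsum
    have hev : ∀ᶠ p : ℤ × ℤ in Filter.cofinite, 2 * ‖z‖ + 1 ≤ ‖φ p‖ :=
      htend.eventually_ge_atTop _
    filter_upwards [hev, Filter.eventually_cofinite_ne (0 : ℤ × ℤ)] with p hp hp0
    -- now the estimate
    set l := φ p with hl
    have hnp : (1:ℝ) ≤ ‖p‖ := by
      have h : p.1 ≠ 0 ∨ p.2 ≠ 0 := by
        by_contra hcon
        push_neg at hcon
        exact hp0 (Prod.ext hcon.1 hcon.2)
      rw [Prod.norm_def]
      rcases h with h | h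
      · exact le_max_of_le_left (by rw [Int.norm_eq_abs]; exact_mod_cast Int.one_le_abs h)
      · exact le_max_of_le_right (by rw [Int.norm_eq_abs]; exact_mod_cast Int.one_le_abs h)
    have hlz : 2 * ‖z‖ + 1 ≤ ‖l‖ := hp
    have hlpos : (0:ℝ) < ‖l‖ := by nlinarith [norm_nonneg z]
    have hl0 : l ≠ 0 := by intro h; rw [h] at hlpos; simp at hlpos
    have hzl : ‖l‖ / 2 ≤ ‖z - l‖ := by
      have : ‖l‖ - ‖z‖ ≤ ‖z - l‖ := by
        calc ‖l‖ - ‖z‖ ≤ ‖l - z‖ := by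
              simpa using norm_sub_norm_le l z
          _ = ‖z - l‖ := norm_sub_rev l z
      nlinarith [norm_nonneg z]
    have hzl0 : z - l ≠ 0 := by
      intro h
      rw [h] at hzl
      simp only [norm_zero] at hzl
      nlinarith
    have heq : 1 / (z - l) ^ 2 - 1 / l ^ 2 = z * (2 * l - z) / ((z - l) ^ 2 * l ^ 2) := by
      field_simp
      ring
    have hnum : ‖z * (2 * l - z)‖ ≤ 3 * ‖z‖ * ‖l‖ := by
      rw [norm_mul]
      have : ‖2 * l - z‖ ≤ 2 * ‖l‖ + ‖z‖ :=
        (norm_sub_le _ _).trans (by rw [norm_mul]; simp)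
      calc ‖z‖ * ‖2 * l - z‖ ≤ ‖z‖ * (2 * ‖l‖ + ‖z‖) := by
            exact mul_le_mul_of_nonneg_left this (norm_nonneg z)
        _ ≤ 3 * ‖z‖ * ‖l‖ := by nlinarith [norm_nonneg z, norm_nonneg l]
    have hbound : ‖1 / (z - l) ^ 2 - 1 / l ^ 2‖ ≤ 12 * ‖z‖ / ‖l‖ ^ 3 := by
      rw [heq, norm_div, norm_mul ((z - l) ^ 2) (l ^ 2), norm_pow, norm_pow]
      rw [div_le_div_iff₀ (mul_pos (pow_pos (norm_pos_iff.mpr hzl0) 2) (pow_pos hlpos 2)) (by positivity)]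
      have h1 : (‖l‖/2) ^ 2 * ‖l‖ ^ 2 ≤ ‖z - l‖ ^ 2 * ‖l‖ ^ 2 := by
        apply mul_le_mul_of_nonneg_right _ (by positivity)
        exact pow_le_pow_left₀ (by positivity) hzl 2
      calc ‖z * (2 * l - z)‖ * ‖l‖ ^ 3 ≤ 3 * ‖z‖ * ‖l‖ * ‖l‖ ^ 3 := by
            exact mul_le_mul_of_nonneg_right hnum (by positivity)
        _ = 12 * ‖z‖ * ((‖l‖/2) ^ 2 * ‖l‖ ^ 2) := by ring
        _ ≤ 12 * ‖z‖ * (‖z - l‖ ^ 2 * ‖l‖ ^ 2) := by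
            exact mul_le_mul_of_nonneg_left h1 (by positivity)
    -- compare with the rpow bound
    have hpe : ‖(finTwoArrowEquiv ℤ).symm p‖ = ‖p‖ := by
      rw [EisensteinSeries.norm_eq_max_natAbs, Prod.norm_def]
      simp only [finTwoArrowEquiv_symm_apply, Matrix.cons_val_zero, Matrix.cons_val_one,
        Matrix.head_cons, Int.norm_eq_abs]
      rw [Nat.cast_max]
      congr 1 <;> rw [Nat.cast_natAbs] <;> exact_mod_cast rfl
    have hr3 : ‖p‖ ^ (-(3:ℝ)) = (‖p‖ ^ (3:ℕ))⁻¹ := by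
      rw [Real.rpow_neg (by positivity), ← Real.rpow_natCast ‖p‖ 3]
      norm_num
    rw [hpe, hr3]
    have hcp : c * ‖p‖ ≤ ‖l‖ := hnorm p
    have hcpos : (0:ℝ) < c * ‖p‖ := by positivity
    have h3 : (c * ‖p‖) ^ 3 ≤ ‖l‖ ^ 3 := pow_le_pow_left₀ (le_of_lt hcpos) hcp 3
    calc ‖1 / (z - l) ^ 2 - 1 / l ^ 2‖ ≤ 12 * ‖z‖ / ‖l‖ ^ 3 := hbound
      _ ≤ 12 * ‖z‖ / (c * ‖p‖) ^ 3 := by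
          apply div_le_div_of_nonneg_left _ (by positivity) h3
          positivity
      _ = 12 * ‖z‖ / c ^ 3 * (‖p‖ ^ (3:ℕ))⁻¹ := by
          rw [mul_pow, ← div_div, div_eq_mul_inv]
  have := key.subtype {p : ℤ × ℤ | p ≠ 0}
  apply this.congr
  intro p
  rfl
end

section
/- Define the Weierstrass function of L by ℘(z) = 1/z² + ∑_{l ∈ L, l ≠ 0} (1/(z−l)² − 1/l²). Then ℘ is even and L-periodic away from the lattice: for every z ∈ ℂ with z ∉ L one has ℘(−z) = ℘(z), and ℘(z + m) = ℘(z) for every m ∈ L. -/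
/-- The Weierstrass ℘-function of the lattice `L = ℤγ₁ + ℤγ₂`:
`℘(z) = 1/z² + ∑_{l ∈ L, l ≠ 0} (1/(z−l)² − 1/l²)`. -/
noncomputable def weierstrassP (γ₁ γ₂ : ℂ) (z : ℂ) : ℂ :=
  1 / z ^ 2 + ∑' l : {l : ℂ // l ∈ latticeSet γ₁ γ₂ ∧ l ≠ 0},
    (1 / (z - (l : ℂ)) ^ 2 - 1 / (l : ℂ) ^ 2)

namespace WPAux

open EisensteinSeries Filter

/-- coordinates to lattice point -/
def latv (γ₁ γ₂ : ℂ) (v : Fin 2 → ℤ) : ℂ := (v 0 : ℂ) * γ₁ + (v 1 : ℂ) * γ₂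

variable (γ₁ γ₂ : ℂ)

lemma latv_mem (v : Fin 2 → ℤ) : latv γ₁ γ₂ v ∈ latticeSet γ₁ γ₂ := ⟨v 0, v 1, rfl⟩

lemma latv_zero : latv γ₁ γ₂ 0 = 0 := by simp [latv]

lemma latv_sub (v u : Fin 2 → ℤ) :
    latv γ₁ γ₂ (v - u) = latv γ₁ γ₂ v - latv γ₁ γ₂ u := by
  simp only [latv, Pi.sub_apply]
  push_cast
  ring

lemma mem_lattice_iff {x : ℂ} : x ∈ latticeSet γ₁ γ₂ ↔ ∃ v : Fin 2 → ℤ, x = latv γ₁ γ₂ v := by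
  constructor
  · rintro ⟨m, n, rfl⟩
    exact ⟨![m, n], by simp [latv]⟩
  · rintro ⟨v, rfl⟩
    exact latv_mem _ _ _

lemma neg_mem_lattice {x : ℂ} (hx : x ∈ latticeSet γ₁ γ₂) : -x ∈ latticeSet γ₁ γ₂ := by
  obtain ⟨m, n, rfl⟩ := hx
  exact ⟨-m, -n, by push_cast; ring⟩

variable {γ₁ γ₂}

lemma im_ne (hγ : γ₂ / γ₁ ∉ (Set.range ((↑) : ℝ → ℂ))) :
    (γ₂ / γ₁).im ≠ 0 := by
  intro h
  exact hγ ⟨(γ₂ / γ₁).re, by apply Complex.ext <;> simp [h]⟩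

lemma int_comb_eq_zero (hγ : γ₂ / γ₁ ∉ (Set.range ((↑) : ℝ → ℂ)))
    {a b : ℤ} (h : (a : ℂ) + (b : ℂ) * (γ₂ / γ₁) = 0) : a = 0 ∧ b = 0 := by
  have him := im_ne hγ
  have hb : (b : ℝ) * (γ₂ / γ₁).im = 0 := by
    have := congrArg Complex.im h
    simpa using this
  have hb0 : b = 0 := by
    rcases mul_eq_zero.1 hb with h' | h'
    · exact_mod_cast h'
    · exact absurd h' him
  subst hb0
  simp only [Int.cast_zero, zero_mul, add_zero] at h
  exact ⟨by exact_mod_cast h, rfl⟩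

lemma latv_injective (hγ₁ : γ₁ ≠ 0) (hγ : γ₂ / γ₁ ∉ (Set.range ((↑) : ℝ → ℂ))) :
    Function.Injective (latv γ₁ γ₂) := by
  intro v w h
  set a := v 0 - w 0 with ha
  set b := v 1 - w 1 with hb
  have e1 : (a : ℂ) * γ₁ + (b : ℂ) * γ₂ = 0 := by
    simp only [latv] at h
    push_cast [ha, hb]
    linear_combination h
  have h2 : (a : ℂ) + (b : ℂ) * (γ₂ / γ₁) = 0 := by
    field_simp
    linear_combination e1
  obtain ⟨h3, h4⟩ := int_comb_eq_zero hγ h2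
  funext i
  fin_cases i
  · show v 0 = w 0; omega
  · show v 1 = w 1; omega

lemma latv_ne_zero (hγ₁ : γ₁ ≠ 0) (hγ : γ₂ / γ₁ ∉ (Set.range ((↑) : ℝ → ℂ)))
    {v : Fin 2 → ℤ} (hv : v ≠ 0) : latv γ₁ γ₂ v ≠ 0 := by
  intro h
  exact hv (latv_injective hγ₁ hγ (by rw [h, latv_zero]))

lemma exists_r (hγ₁ : γ₁ ≠ 0) (hγ : γ₂ / γ₁ ∉ (Set.range ((↑) : ℝ → ℂ))) :
    ∃ r : ℝ, 0 < r ∧ ∀ v : Fin 2 → ℤ, r * ‖v‖ ≤ ‖latv γ₁ γ₂ v‖ := by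
  have him := im_ne hγ
  set τ := γ₂ / γ₁ with hτ
  set y := |τ.im| with hy
  have hy0 : 0 < y := abs_pos.2 him
  set c : ℝ := y / (y + ‖τ‖ + 1) with hc
  have hτ0 : (0:ℝ) ≤ ‖τ‖ := norm_nonneg τ
  have hc0 : 0 < c := by positivity
  refine ⟨‖γ₁‖ * c, mul_pos (norm_pos_iff.2 hγ₁) hc0, fun v => ?_⟩
  set a := v 0
  set b := v 1
  have hfac : latv γ₁ γ₂ v = γ₁ * ((a : ℂ) + (b : ℂ) * τ) := by
    rw [latv, hτ]
    field_simp
    ring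
  set X := ‖(a : ℂ) + (b : ℂ) * τ‖ with hX
  have hX0 : 0 ≤ X := norm_nonneg _
  have hbound : ∀ i, ‖v i‖ ≤ X / c := by
    have hb : |(b : ℝ)| * y ≤ X := by
      have h1 : |((a : ℂ) + (b : ℂ) * τ).im| ≤ X := Complex.abs_im_le_norm _
      have h2 : ((a : ℂ) + (b : ℂ) * τ).im = (b : ℝ) * τ.im := by simp
      rw [h2, abs_mul] at h1
      simpa [hy] using h1
    have ha : |(a : ℝ)| ≤ X + |(b : ℝ)| * ‖τ‖ := by
      have h1 : ‖(a : ℂ)‖ ≤ ‖(a : ℂ) + (b : ℂ) * τ‖ + ‖(b : ℂ) * τ‖ := by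
        calc ‖(a : ℂ)‖ = ‖((a : ℂ) + (b : ℂ) * τ) - (b : ℂ) * τ‖ := by ring_nf
          _ ≤ _ := norm_sub_le _ _
      simpa [Complex.norm_intCast, norm_mul] using h1
    have h5 : |(a : ℝ)| * y ≤ X * y + X * ‖τ‖ := by
      nlinarith [mul_le_mul_of_nonneg_right hb hτ0, mul_le_mul_of_nonneg_right ha hy0.le]
    have key_a : c * |(a : ℝ)| ≤ X := by
      rw [hc, div_mul_eq_mul_div, div_le_iff₀ (by positivity)]
      nlinarith [hX0]
    have key_b : c * |(b : ℝ)| ≤ X := by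
      have : c ≤ y := by
        rw [hc, div_le_iff₀ (by positivity)]
        nlinarith
      calc c * |(b : ℝ)| ≤ y * |(b : ℝ)| := by
            apply mul_le_mul_of_nonneg_right this (abs_nonneg _)
        _ ≤ X := by rw [mul_comm]; exact hb
    intro i
    fin_cases i
    · show ‖a‖ ≤ X / c
      rw [Int.norm_eq_abs, le_div_iff₀ hc0]
      rw [mul_comm]
      exact key_a
    · show ‖b‖ ≤ X / c
      rw [Int.norm_eq_abs, le_div_iff₀ hc0]
      rw [mul_comm]
      exact key_b
  have hnv : ‖v‖ ≤ X / c := by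
    rw [pi_norm_le_iff_of_nonneg (by positivity)]
    exact hbound
  have hXeq : ‖latv γ₁ γ₂ v‖ = ‖γ₁‖ * X := by rw [hfac, norm_mul]
  rw [hXeq]
  calc ‖γ₁‖ * c * ‖v‖ ≤ ‖γ₁‖ * c * (X / c) := by
        apply mul_le_mul_of_nonneg_left hnv (by positivity)
    _ = ‖γ₁‖ * X := by field_simp

lemma summable_key (hγ₁ : γ₁ ≠ 0) (hγ : γ₂ / γ₁ ∉ (Set.range ((↑) : ℝ → ℂ))) (z w : ℂ) :
    Summable fun v : Fin 2 → ℤ => 1 / (z - latv γ₁ γ₂ v) ^ 2 - 1 / (w - latv γ₁ γ₂ v) ^ 2 := by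
  obtain ⟨r, hr, hlb⟩ := exists_r hγ₁ hγ
  set M : ℝ := max ‖z‖ ‖w‖ + 1 with hM
  have hM0 : 0 < M := by positivity
  have hzM : ‖z‖ ≤ M := by
    have := le_max_left ‖z‖ ‖w‖; linarith
  have hwM : ‖w‖ ≤ M := by
    have := le_max_right ‖z‖ ‖w‖; linarith
  set C : ℝ := 96 * M / r ^ 3 with hC
  set R : ℝ := (2 * M + 1) / r with hR
  have hR0 : 0 < R := by positivity
  apply Summable.of_norm_bounded_eventually
    ((summable_one_div_norm_rpow (by norm_num : (2:ℝ) < 3)).mul_left C)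
  rw [eventually_cofinite]
  have hfin : {v : Fin 2 → ℤ | ‖v‖ < R}.Finite := by
    have hsub : {v : Fin 2 → ℤ | ‖v‖ < R} ⊆
        Set.pi Set.univ (fun _ : Fin 2 => (↑(Finset.Icc (-⌈R⌉) ⌈R⌉) : Set ℤ)) := by
      intro v hv
      intro i _
      simp only [Finset.coe_Icc, Set.mem_Icc]
      have h1 : ‖v i‖ ≤ ‖v‖ := norm_le_pi_norm v i
      have h2 : (|v i| : ℝ) < R := by
        rw [← Int.cast_abs]
        calc ((|v i| : ℤ) : ℝ) = ‖v i‖ := by rw [Int.norm_eq_abs]; push_cast; rfl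
          _ ≤ ‖v‖ := h1
          _ < R := hv
      have h3 : (|v i| : ℝ) ≤ ⌈R⌉ := h2.le.trans (Int.le_ceil R)
      have h4 : |v i| ≤ ⌈R⌉ := by exact_mod_cast h3
      constructor <;> [linarith [abs_nonneg (v i), neg_abs_le (v i)]; linarith [le_abs_self (v i)]]
    exact Set.Finite.subset (Set.Finite.pi (fun _ => Finset.finite_toSet _)) hsub
  apply hfin.subset
  intro v hv
  simp only [Set.mem_setOf_eq, not_le] at hv ⊢
  by_contra hvR
  push_neg at hvR
  refine absurd hv (not_lt.2 ?_)
  have hv0 : (0:ℝ) < ‖v‖ := lt_of_lt_of_le hR0 hvR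
  set n : ℝ := ‖latv γ₁ γ₂ v‖ with hn
  have hrn : r * ‖v‖ ≤ n := hlb v
  have hn1 : 2 * M + 1 ≤ n := by
    calc 2 * M + 1 = r * R := by rw [hR]; field_simp
      _ ≤ r * ‖v‖ := by apply mul_le_mul_of_nonneg_left hvR hr.le
      _ ≤ n := hrn
  have hn0 : 0 < n := by linarith
  have hAn : n / 2 ≤ ‖z - latv γ₁ γ₂ v‖ := by
    have := norm_sub_norm_le (latv γ₁ γ₂ v) z
    rw [norm_sub_rev (latv γ₁ γ₂ v) z] at this
    linarith
  have hBn : n / 2 ≤ ‖w - latv γ₁ γ₂ v‖ := by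
    have := norm_sub_norm_le (latv γ₁ γ₂ v) w
    rw [norm_sub_rev (latv γ₁ γ₂ v) w] at this
    linarith
  have hA1 : 0 < ‖z - latv γ₁ γ₂ v‖ := lt_of_lt_of_le (by positivity) hAn
  have hB1 : 0 < ‖w - latv γ₁ γ₂ v‖ := lt_of_lt_of_le (by positivity) hBn
  have hA0 : z - latv γ₁ γ₂ v ≠ 0 := norm_pos_iff.1 hA1
  have hB0 : w - latv γ₁ γ₂ v ≠ 0 := norm_pos_iff.1 hB1
  have hfv : 1 / (z - latv γ₁ γ₂ v) ^ 2 - 1 / (w - latv γ₁ γ₂ v) ^ 2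
      = ((w - z) * ((z - latv γ₁ γ₂ v) + (w - latv γ₁ γ₂ v)))
        / ((z - latv γ₁ γ₂ v) ^ 2 * (w - latv γ₁ γ₂ v) ^ 2) := by
    field_simp
    ring
  rw [hfv, norm_div, norm_mul, norm_mul, norm_pow, norm_pow]
  have hnum1 : ‖w - z‖ ≤ 2 * M := by
    have := norm_sub_le w z; linarith
  have hnum2 : ‖(z - latv γ₁ γ₂ v) + (w - latv γ₁ γ₂ v)‖ ≤ 3 * n := by
    have h1 := norm_add_le (z - latv γ₁ γ₂ v) (w - latv γ₁ γ₂ v)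
    have h2 : ‖z - latv γ₁ γ₂ v‖ ≤ ‖z‖ + n := by
      have := norm_sub_le z (latv γ₁ γ₂ v); linarith
    have h3 : ‖w - latv γ₁ γ₂ v‖ ≤ ‖w‖ + n := by
      have := norm_sub_le w (latv γ₁ γ₂ v); linarith
    linarith
  have hden : (n / 2) ^ 2 * (n / 2) ^ 2 ≤ ‖z - latv γ₁ γ₂ v‖ ^ 2 * ‖w - latv γ₁ γ₂ v‖ ^ 2 := by
    apply mul_le_mul
    · exact pow_le_pow_left₀ (by positivity) hAn 2
    · exact pow_le_pow_left₀ (by positivity) hBn 2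
    · positivity
    · positivity
  have hrpow : ‖v‖ ^ (-(3:ℝ)) = (‖v‖ ^ (3:ℕ))⁻¹ := by
    rw [← Real.rpow_natCast ‖v‖ 3, ← Real.rpow_neg (norm_nonneg v)]
    norm_num
  rw [hrpow]
  have step1 : ‖w - z‖ * ‖(z - latv γ₁ γ₂ v) + (w - latv γ₁ γ₂ v)‖
      / (‖z - latv γ₁ γ₂ v‖ ^ 2 * ‖w - latv γ₁ γ₂ v‖ ^ 2) ≤ 96 * M / n ^ 3 := by
    rw [div_le_div_iff₀ (mul_pos (pow_pos hA1 2) (pow_pos hB1 2)) (by positivity)]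
    have hP : ‖w - z‖ * ‖(z - latv γ₁ γ₂ v) + (w - latv γ₁ γ₂ v)‖ ≤ 6 * M * n := by
      calc ‖w - z‖ * ‖(z - latv γ₁ γ₂ v) + (w - latv γ₁ γ₂ v)‖ ≤ 2 * M * (3 * n) := by
            exact mul_le_mul hnum1 hnum2 (norm_nonneg _) (by positivity)
        _ = 6 * M * n := by ring
    have hPn := mul_le_mul_of_nonneg_right hP (by positivity : (0:ℝ) ≤ n ^ 3)
    have h96 := mul_le_mul_of_nonneg_left hden (by positivity : (0:ℝ) ≤ 96 * M)
    nlinarith [hPn, h96]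
  refine step1.trans ?_
  have hCrw : C * (‖v‖ ^ (3:ℕ))⁻¹ = 96 * M / (r ^ 3 * ‖v‖ ^ 3) := by
    rw [hC]; field_simp
  rw [hCrw, div_le_div_iff₀ (by positivity) (by positivity)]
  have hcube : (r * ‖v‖) ^ 3 ≤ n ^ 3 := pow_le_pow_left₀ (by positivity) hrn 3
  calc 96 * M * (r ^ 3 * ‖v‖ ^ 3) = 96 * M * (r * ‖v‖) ^ 3 := by ring
    _ ≤ 96 * M * n ^ 3 := mul_le_mul_of_nonneg_left hcube (by positivity)

/-- The shifted-difference lattice sum. -/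
noncomputable def Dsum (γ₁ γ₂ : ℂ) (z : ℂ) (u : Fin 2 → ℤ) : ℂ :=
  ∑' v : Fin 2 → ℤ,
    (1 / (z + latv γ₁ γ₂ u - latv γ₁ γ₂ v) ^ 2 - 1 / (z - latv γ₁ γ₂ v) ^ 2)

lemma wP_eq (hγ₁ : γ₁ ≠ 0) (hγ : γ₂ / γ₁ ∉ (Set.range ((↑) : ℝ → ℂ))) (z : ℂ) :
    weierstrassP γ₁ γ₂ z = 1 / z ^ 2 + ∑' v : {v : Fin 2 → ℤ // v ≠ 0},
      (1 / (z - latv γ₁ γ₂ v.1) ^ 2 - 1 / (latv γ₁ γ₂ v.1) ^ 2) := by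
  unfold weierstrassP
  congr 1
  have hEs : Function.Surjective
      (fun v : {v : Fin 2 → ℤ // v ≠ 0} =>
        (⟨latv γ₁ γ₂ v.1, latv_mem γ₁ γ₂ v.1, latv_ne_zero hγ₁ hγ v.2⟩ :
          {l : ℂ // l ∈ latticeSet γ₁ γ₂ ∧ l ≠ 0})) := by
    rintro ⟨l, ⟨m, n, rfl⟩, hne⟩
    have hl : latv γ₁ γ₂ ![m, n] = (m : ℂ) * γ₁ + (n : ℂ) * γ₂ := by simp [latv]
    refine ⟨⟨![m, n], fun h0 => hne ?_⟩, Subtype.ext hl⟩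
    rw [← hl, h0, latv_zero]
  let E : {v : Fin 2 → ℤ // v ≠ 0} ≃ {l : ℂ // l ∈ latticeSet γ₁ γ₂ ∧ l ≠ 0} :=
    Equiv.ofBijective _
      ⟨fun v w h => Subtype.ext (latv_injective hγ₁ hγ (congrArg Subtype.val h)), hEs⟩
  exact (Equiv.tsum_eq E _).symm

lemma split0 (F : (Fin 2 → ℤ) → ℂ) (hF : Summable F) :
    ∑' v, F v = F 0 + ∑' v : {v : Fin 2 → ℤ // v ≠ 0}, F v.1 := by
  classical
  rw [Summable.tsum_eq_add_tsum_ite hF 0]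
  congr 1
  have h1 : ∑' v : {v : Fin 2 → ℤ // v ≠ 0}, F v.1
      = ∑' v, Set.indicator {v : Fin 2 → ℤ | v ≠ 0} F v := tsum_subtype _ _
  rw [h1]
  apply tsum_congr
  intro v
  by_cases h : v = 0 <;> simp [h, Set.indicator]

lemma wdiff (hγ₁ : γ₁ ≠ 0) (hγ : γ₂ / γ₁ ∉ (Set.range ((↑) : ℝ → ℂ))) (z : ℂ) (u : Fin 2 → ℤ) :
    weierstrassP γ₁ γ₂ (z + latv γ₁ γ₂ u) = weierstrassP γ₁ γ₂ z + Dsum γ₁ γ₂ z u := by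
  set m := latv γ₁ γ₂ u with hm
  have hS1 : Summable (fun v => 1 / (z + m - latv γ₁ γ₂ v) ^ 2 - 1 / (z - latv γ₁ γ₂ v) ^ 2) :=
    summable_key hγ₁ hγ (z + m) z
  have hcongr : ∀ x : ℂ, Summable (fun v => 1 / (x - latv γ₁ γ₂ v) ^ 2 - 1 / (latv γ₁ γ₂ v) ^ 2) := by
    intro x
    apply (summable_key hγ₁ hγ x 0).congr
    intro v
    rw [zero_sub, neg_sq]
  have hSz : Summable (fun v : {v : Fin 2 → ℤ // v ≠ 0} =>
      1 / (z - latv γ₁ γ₂ v.1) ^ 2 - 1 / (latv γ₁ γ₂ v.1) ^ 2) :=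
    (hcongr z).subtype _
  have hSsub : Summable (fun v : {v : Fin 2 → ℤ // v ≠ 0} =>
      1 / (z + m - latv γ₁ γ₂ v.1) ^ 2 - 1 / (z - latv γ₁ γ₂ v.1) ^ 2) :=
    hS1.subtype _
  have hsplit := split0 _ hS1
  have hF0 : (1 / (z + m - latv γ₁ γ₂ 0) ^ 2 - 1 / (z - latv γ₁ γ₂ 0) ^ 2)
      = 1 / (z + m) ^ 2 - 1 / z ^ 2 := by
    rw [latv_zero, sub_zero, sub_zero]
  have hsubsum : (∑' v : {v : Fin 2 → ℤ // v ≠ 0},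
        (1 / (z + m - latv γ₁ γ₂ v.1) ^ 2 - 1 / (latv γ₁ γ₂ v.1) ^ 2))
      = (∑' v : {v : Fin 2 → ℤ // v ≠ 0},
          (1 / (z - latv γ₁ γ₂ v.1) ^ 2 - 1 / (latv γ₁ γ₂ v.1) ^ 2))
        + ∑' v : {v : Fin 2 → ℤ // v ≠ 0},
            (1 / (z + m - latv γ₁ γ₂ v.1) ^ 2 - 1 / (z - latv γ₁ γ₂ v.1) ^ 2) := by
    rw [← Summable.tsum_add hSz hSsub]
    apply tsum_congr
    intro v
    ring
  rw [wP_eq hγ₁ hγ (z + m), wP_eq hγ₁ hγ z, Dsum, ← hm, hsplit, hsubsum, hF0]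
  ring

lemma D_base (hγ₁ : γ₁ ≠ 0) (hγ : γ₂ / γ₁ ∉ (Set.range ((↑) : ℝ → ℂ))) (z w : ℂ)
    (u : Fin 2 → ℤ) : Dsum γ₁ γ₂ z u = Dsum γ₁ γ₂ w u := by
  set m := latv γ₁ γ₂ u with hm
  have s_ac := summable_key hγ₁ hγ (z + m) (w + m)
  have s_cd := summable_key hγ₁ hγ (w + m) w
  have s_bd := summable_key hγ₁ hγ z w
  have e1 : (∑' v : Fin 2 → ℤ, (1 / (z + m - latv γ₁ γ₂ v) ^ 2 - 1 / (w + m - latv γ₁ γ₂ v) ^ 2))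
      = ∑' v : Fin 2 → ℤ, (1 / (z - latv γ₁ γ₂ v) ^ 2 - 1 / (w - latv γ₁ γ₂ v) ^ 2) := by
    rw [← (Equiv.subRight u).tsum_eq
      (fun v => 1 / (z - latv γ₁ γ₂ v) ^ 2 - 1 / (w - latv γ₁ γ₂ v) ^ 2)]
    apply tsum_congr
    intro v
    simp only [Equiv.subRight_apply]
    rw [latv_sub, ← hm,
      show z - (latv γ₁ γ₂ v - m) = z + m - latv γ₁ γ₂ v from by ring,
      show w - (latv γ₁ γ₂ v - m) = w + m - latv γ₁ γ₂ v from by ring]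
  unfold Dsum
  rw [← hm]
  have hrw : ∀ v : Fin 2 → ℤ,
      (1 / (z + m - latv γ₁ γ₂ v) ^ 2 - 1 / (z - latv γ₁ γ₂ v) ^ 2)
      = (1 / (z + m - latv γ₁ γ₂ v) ^ 2 - 1 / (w + m - latv γ₁ γ₂ v) ^ 2)
        + ((1 / (w + m - latv γ₁ γ₂ v) ^ 2 - 1 / (w - latv γ₁ γ₂ v) ^ 2)
          + -(1 / (z - latv γ₁ γ₂ v) ^ 2 - 1 / (w - latv γ₁ γ₂ v) ^ 2)) := fun v => by ring
  calc (∑' v : Fin 2 → ℤ, (1 / (z + m - latv γ₁ γ₂ v) ^ 2 - 1 / (z - latv γ₁ γ₂ v) ^ 2))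
      = ∑' v : Fin 2 → ℤ,
          ((1 / (z + m - latv γ₁ γ₂ v) ^ 2 - 1 / (w + m - latv γ₁ γ₂ v) ^ 2)
          + ((1 / (w + m - latv γ₁ γ₂ v) ^ 2 - 1 / (w - latv γ₁ γ₂ v) ^ 2)
            + -(1 / (z - latv γ₁ γ₂ v) ^ 2 - 1 / (w - latv γ₁ γ₂ v) ^ 2))) := tsum_congr hrw
    _ = (∑' v : Fin 2 → ℤ, (1 / (z + m - latv γ₁ γ₂ v) ^ 2 - 1 / (w + m - latv γ₁ γ₂ v) ^ 2))
        + ∑' v : Fin 2 → ℤ,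
            ((1 / (w + m - latv γ₁ γ₂ v) ^ 2 - 1 / (w - latv γ₁ γ₂ v) ^ 2)
            + -(1 / (z - latv γ₁ γ₂ v) ^ 2 - 1 / (w - latv γ₁ γ₂ v) ^ 2)) :=
      Summable.tsum_add s_ac (s_cd.add s_bd.neg)
    _ = (∑' v : Fin 2 → ℤ, (1 / (z + m - latv γ₁ γ₂ v) ^ 2 - 1 / (w + m - latv γ₁ γ₂ v) ^ 2))
        + ((∑' v : Fin 2 → ℤ, (1 / (w + m - latv γ₁ γ₂ v) ^ 2 - 1 / (w - latv γ₁ γ₂ v) ^ 2))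
          + ∑' v : Fin 2 → ℤ, -(1 / (z - latv γ₁ γ₂ v) ^ 2 - 1 / (w - latv γ₁ γ₂ v) ^ 2)) := by
      rw [Summable.tsum_add s_cd s_bd.neg]
    _ = ∑' v : Fin 2 → ℤ, (1 / (w + m - latv γ₁ γ₂ v) ^ 2 - 1 / (w - latv γ₁ γ₂ v) ^ 2) := by
      rw [tsum_neg, e1]
      ring

end WPAux

open WPAux in
lemma wP_even (γ₁ γ₂ : ℂ) (z : ℂ) : weierstrassP γ₁ γ₂ (-z) = weierstrassP γ₁ γ₂ z := by
  unfold weierstrassP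
  congr 1
  · rw [neg_sq]
  let N : {l : ℂ // l ∈ latticeSet γ₁ γ₂ ∧ l ≠ 0} ≃ {l : ℂ // l ∈ latticeSet γ₁ γ₂ ∧ l ≠ 0} :=
    { toFun := fun l => ⟨-l.1, neg_mem_lattice γ₁ γ₂ l.2.1, neg_ne_zero.2 l.2.2⟩
      invFun := fun l => ⟨-l.1, neg_mem_lattice γ₁ γ₂ l.2.1, neg_ne_zero.2 l.2.2⟩
      left_inv := fun l => Subtype.ext (neg_neg l.1)
      right_inv := fun l => Subtype.ext (neg_neg l.1) }
  rw [← Equiv.tsum_eq N]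
  apply tsum_congr
  intro l
  show 1 / (-z - -(l.1 : ℂ)) ^ 2 - 1 / (-(l.1 : ℂ)) ^ 2 = 1 / (z - l.1) ^ 2 - 1 / (l.1 : ℂ) ^ 2
  rw [show -z - -(l.1 : ℂ) = -(z - l.1) from by ring, neg_sq, neg_sq]

/-- The Weierstrass ℘-function is even and `L`-periodic away from the lattice. -/
theorem weierstrassP_even_and_periodic (γ₁ γ₂ : ℂ) (hγ₁ : γ₁ ≠ 0)
    (hγ : γ₂ / γ₁ ∉ (Set.range ((↑) : ℝ → ℂ)))
    (z : ℂ) (hz : z ∉ latticeSet γ₁ γ₂) :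
    weierstrassP γ₁ γ₂ (-z) = weierstrassP γ₁ γ₂ z ∧
      ∀ m ∈ latticeSet γ₁ γ₂, weierstrassP γ₁ γ₂ (z + m) = weierstrassP γ₁ γ₂ z := by
  refine ⟨wP_even γ₁ γ₂ z, ?_⟩
  intro m hm
  obtain ⟨u, rfl⟩ := (WPAux.mem_lattice_iff γ₁ γ₂).1 hm
  set m := WPAux.latv γ₁ γ₂ u with hmu
  have h1 := WPAux.wdiff hγ₁ hγ z u
  have h2 := WPAux.wdiff hγ₁ hγ (-m / 2) u
  have h3 := WPAux.D_base hγ₁ hγ z (-m / 2) u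
  have h6 : weierstrassP γ₁ γ₂ (-m / 2 + m) = weierstrassP γ₁ γ₂ (-m / 2) := by
    rw [show -m / 2 + m = -(-m / 2) from by ring]
    exact wP_even γ₁ γ₂ _
  have h7 : WPAux.Dsum γ₁ γ₂ (-m / 2) u = 0 := by
    rw [← hmu] at h2
    linear_combination h6 - h2
  rw [← hmu] at h1
  rw [h1, h3, h7, add_zero]
end

section
/- For τ ∈ ℂ with Im τ > 0, the Jacobi theta function θ vanishes exactly on the lattice ℤ + ℤτ: for every z ∈ ℂ, θ(z) = 0 if and only if there exist integers m, n with z = m + n·τ. -/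
open Complex

lemma tprod_eq_zero' {ι : Type*} {f : ι → ℂ} (i : ι) (h : f i = 0) : ∏' j, f j = 0 := by
  have hp : HasProd f 0 := by
    rw [HasProd]
    apply Filter.Tendsto.congr' _ tendsto_const_nhds
    filter_upwards [Filter.eventually_ge_atTop ({i} : Finset ι)] with s hs
    exact (Finset.prod_eq_zero (hs (Finset.mem_singleton_self i)) h).symm
  exact hp.tprod_eq

lemma summable_log_one_sub {u : ℕ+ → ℂ} (hu : Summable u) :
    Summable fun l => Complex.log (1 - u l) := by
  apply Summable.of_norm_bounded_eventually (g := fun l => (3/2) * ‖u l‖) (hu.norm.mul_left _)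
  have h0 : Filter.Tendsto u Filter.cofinite (nhds 0) := hu.tendsto_cofinite_zero
  have : ∀ᶠ l in Filter.cofinite, ‖u l‖ ≤ 1/2 := by
    have := h0 (Metric.closedBall_mem_nhds (0:ℂ) (by norm_num : (0:ℝ) < 1/2))
    filter_upwards [this] with l hl
    simpa using hl
  filter_upwards [this] with l hl
  have := Complex.norm_log_one_add_half_le_self (z := -u l) (by simpa using hl)
  simpa [sub_eq_add_neg] using this

lemma aux_tprod {u : ℕ+ → ℂ} (hu : Summable u) (h1 : ∀ l, u l ≠ 1) :
    Multipliable (fun l => 1 - u l) ∧ (∏' l, (1 - u l)) ≠ 0 := by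
  have hne : ∀ (x : Unit) (l : ℕ+), (fun _ : Unit => 1 - u ·) l x ≠ 0 := by
    intro _ l h
    exact h1 l (by linear_combination -h)
  have hs : ∀ _ : Unit, Summable fun l => Complex.log (1 - u l) :=
    fun _ => summable_log_one_sub hu
  constructor
  · exact Complex.multipliable_of_summable_log (hs ())
  · have := Complex.cexp_tsum_eq_tprod (fun l => hne () l) (hs ())
    simp only [Function.comp] at this
    rw [← this]
    exact Complex.exp_ne_zero _

lemma summable_exp_aux (τ : ℂ) (hτ : 0 < τ.im) (c : ℂ) :
    Summable fun l : ℕ+ => Complex.exp (2 * Real.pi * I * ((l : ℕ) * τ + c)) := by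
  have hr : Real.exp (-(2 * Real.pi * τ.im)) < 1 := by
    rw [Real.exp_lt_one_iff]
    have := Real.pi_pos
    nlinarith
  have hg : Summable fun l : ℕ+ =>
      Real.exp (-(2 * Real.pi * τ.im)) ^ (l : ℕ) * ‖Complex.exp (2 * Real.pi * I * c)‖ := by
    apply Summable.mul_right
    have : Summable fun n : ℕ => Real.exp (-(2 * Real.pi * τ.im)) ^ n :=
      summable_geometric_of_lt_one (Real.exp_pos _).le hr
    exact this.comp_injective PNat.coe_injective
  apply Summable.of_norm_bounded hg
  intro l
  rw [show (2 * (Real.pi:ℂ) * I * ((l : ℕ) * τ + c)) =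
      (l : ℕ) * (2 * Real.pi * I * τ) + 2 * Real.pi * I * c by ring,
    Complex.exp_add, Complex.exp_nat_mul]
  rw [norm_mul, norm_pow]
  gcongr
  rw [Complex.norm_exp]
  apply le_of_eq
  congr 1
  simp [Complex.mul_re, Complex.mul_im]

/-- The Jacobi theta function
`θ(z) = e^{πiτ/2} (2 sin πz) ∏_{l≥1} (1 − e^{2πilτ})(1 − e^{2πi(lτ+z)})(1 − e^{2πi(lτ−z)})`. -/
noncomputable def jacobiThetaProd (τ z : ℂ) : ℂ :=
  Complex.exp (Real.pi * I * τ / 2) * (2 * Complex.sin (Real.pi * z)) *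
    ∏' l : ℕ+, ((1 - Complex.exp (2 * Real.pi * I * (l : ℕ) * τ)) *
      (1 - Complex.exp (2 * Real.pi * I * ((l : ℕ) * τ + z))) *
      (1 - Complex.exp (2 * Real.pi * I * ((l : ℕ) * τ - z))))

/-- For `τ` in the upper half-plane, the Jacobi theta function vanishes exactly on the
lattice `ℤ + ℤτ`. -/
theorem jacobiThetaProd_eq_zero_iff (τ : ℂ) (hτ : 0 < τ.im) (z : ℂ) :
    jacobiThetaProd τ z = 0 ↔ ∃ m n : ℤ, z = m + n * τ := by
  have h2pi : (2 * (Real.pi : ℂ) * I) ≠ 0 := by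
    simp [Real.pi_ne_zero, I_ne_zero]
  constructor
  · intro h
    by_contra hno
    push_neg at hno
    rw [jacobiThetaProd] at h
    -- the exponential prefactor is nonzero
    have he : Complex.exp (Real.pi * I * τ / 2) ≠ 0 := Complex.exp_ne_zero _
    -- sin factor nonzero
    have hsin : Complex.sin (Real.pi * z) ≠ 0 := by
      intro hs
      rw [Complex.sin_eq_zero_iff] at hs
      obtain ⟨k, hk⟩ := hs
      have hz : z = (k : ℂ) := by
        have hpi : (Real.pi : ℂ) ≠ 0 := by simp [Real.pi_ne_zero]
        apply mul_left_cancel₀ hpi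
        rw [hk]; ring
      exact hno k 0 (by simp [hz])
    -- product factors
    set u1 : ℕ+ → ℂ := fun l => Complex.exp (2 * Real.pi * I * (l : ℕ) * τ) with hu1def
    set u2 : ℕ+ → ℂ := fun l => Complex.exp (2 * Real.pi * I * ((l : ℕ) * τ + z)) with hu2def
    set u3 : ℕ+ → ℂ := fun l => Complex.exp (2 * Real.pi * I * ((l : ℕ) * τ - z)) with hu3def
    have hs1 : Summable u1 := by
      apply (summable_exp_aux τ hτ 0).congr
      intro l
      rw [hu1def]
      ring_nf
    have hs2 : Summable u2 := (summable_exp_aux τ hτ z)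
    have hs3 : Summable u3 := by
      apply (summable_exp_aux τ hτ (-z)).congr
      intro l
      rw [hu3def]
      ring_nf
    have hn1 : ∀ l, u1 l ≠ 1 := by
      intro l hl
      rw [hu1def, Complex.exp_eq_one_iff] at hl
      obtain ⟨n, hn⟩ := hl
      have hw : ((l : ℕ) : ℂ) * τ = n := by
        apply mul_left_cancel₀ h2pi
        rw [show 2 * (Real.pi:ℂ) * I * ((l:ℕ) * τ) = 2 * Real.pi * I * (l:ℕ) * τ by ring, hn]
        ring
      have him : ((l:ℕ):ℝ) * τ.im = 0 := by
        have := congrArg Complex.im hw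
        simpa [Complex.mul_im] using this
      have hlpos : (0:ℝ) < ((l:ℕ):ℝ) := by exact_mod_cast l.pos
      nlinarith [mul_pos hlpos hτ]
    have hn2 : ∀ l, u2 l ≠ 1 := by
      intro l hl
      rw [hu2def, Complex.exp_eq_one_iff] at hl
      obtain ⟨n, hn⟩ := hl
      have hw : ((l : ℕ) : ℂ) * τ + z = n := by
        apply mul_left_cancel₀ h2pi
        rw [hn]; ring
      apply hno n (-(l : ℕ) : ℤ)
      push_cast
      linear_combination hw
    have hn3 : ∀ l, u3 l ≠ 1 := by
      intro l hl
      rw [hu3def, Complex.exp_eq_one_iff] at hl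
      obtain ⟨n, hn⟩ := hl
      have hw : ((l : ℕ) : ℂ) * τ - z = n := by
        apply mul_left_cancel₀ h2pi
        rw [hn]; ring
      apply hno (-n) ((l : ℕ) : ℤ)
      push_cast
      linear_combination -hw
    obtain ⟨hm1, hp1⟩ := aux_tprod hs1 hn1
    obtain ⟨hm2, hp2⟩ := aux_tprod hs2 hn2
    obtain ⟨hm3, hp3⟩ := aux_tprod hs3 hn3
    have hsplit : (∏' l : ℕ+, ((1 - u1 l) * (1 - u2 l) * (1 - u3 l)))
        = (∏' l, (1 - u1 l)) * (∏' l, (1 - u2 l)) * (∏' l, (1 - u3 l)) := by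
      rw [Multipliable.tprod_mul (hm1.mul hm2) hm3, Multipliable.tprod_mul hm1 hm2]
    have hP : (∏' l : ℕ+, ((1 - u1 l) * (1 - u2 l) * (1 - u3 l))) ≠ 0 := by
      rw [hsplit]
      exact mul_ne_zero (mul_ne_zero hp1 hp2) hp3
    exact hP (by
      have := h
      rcases mul_eq_zero.mp this with h' | h'
      · rcases mul_eq_zero.mp h' with h'' | h''
        · exact absurd h'' he
        · exact absurd h'' (by simpa using mul_ne_zero two_ne_zero hsin)
      · exact h')
  · rintro ⟨m, n, rfl⟩
    rw [jacobiThetaProd]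
    rcases lt_trichotomy n 0 with hn | hn | hn
    · -- n < 0 : second factor vanishes at l = (-n).toNat
      have hl : (0 : ℕ) < (-n).toNat := by omega
      apply mul_eq_zero_of_right
      apply tprod_eq_zero' (⟨(-n).toNat, hl⟩ : ℕ+)
      apply mul_eq_zero_of_left
      apply mul_eq_zero_of_right
      have hcast : (((⟨(-n).toNat, hl⟩ : ℕ+) : ℕ) : ℂ) = ((-n : ℤ) : ℂ) := by
        have h' : (((-n).toNat : ℤ)) = -n := Int.toNat_of_nonneg (by omega)
        exact_mod_cast congrArg (Int.cast : ℤ → ℂ) h'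
      rw [sub_eq_zero]
      symm
      rw [Complex.exp_eq_one_iff]
      refine ⟨m, ?_⟩
      push_cast [PNat.mk_coe] at hcast ⊢
      linear_combination (2 * (Real.pi:ℂ) * I * τ) * hcast
    · -- n = 0 : sine factor vanishes
      subst hn
      apply mul_eq_zero_of_left
      apply mul_eq_zero_of_right
      apply mul_eq_zero_of_right
      rw [show (Real.pi : ℂ) * ((m:ℂ) + (0:ℤ) * τ) = (m : ℂ) * Real.pi by push_cast; ring]
      exact_mod_cast Complex.sin_int_mul_pi m
    · -- n > 0 : third factor vanishes at l = n.toNat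
      have hl : (0 : ℕ) < n.toNat := by omega
      apply mul_eq_zero_of_right
      apply tprod_eq_zero' (⟨n.toNat, hl⟩ : ℕ+)
      apply mul_eq_zero_of_right
      have hcast : (((⟨n.toNat, hl⟩ : ℕ+) : ℕ) : ℂ) = ((n : ℤ) : ℂ) := by
        have h' : ((n.toNat : ℤ)) = n := Int.toNat_of_nonneg (by omega)
        exact_mod_cast congrArg (Int.cast : ℤ → ℂ) h'
      rw [sub_eq_zero]
      symm
      rw [Complex.exp_eq_one_iff]
      refine ⟨-m, ?_⟩
      push_cast [PNat.mk_coe] at hcast ⊢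
      linear_combination (2 * (Real.pi:ℂ) * I * τ) * hcast
end

section
/- Let r ∈ ℕ, let z : Fin r → ℂ and m : Fin r → ℤ satisfy ∑_k m(k) = 0 and ∑_k m(k)·z(k) = 0. Define f : ℂ → ℂ by f(w) = ∏_{k} θ(w − z(k))^{m(k)}, using integer powers in ℂ. Then f is doubly periodic: f(w + 1) = f(w) and f(w + τ) = f(w) for every w ∈ ℂ. In particular f is an elliptic function for the lattice ℤ + ℤτ. -/
open Complex

lemma hasProd_zero_of_eq_zero {β : Type*} {f : β → ℂ} {b : β} (h : f b = 0) :
    HasProd f 0 := by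
  have hev : ∀ᶠ s : Finset β in Filter.atTop, (0 : ℂ) = ∏ i ∈ s, f i := by
    filter_upwards [Filter.eventually_ge_atTop ({b} : Finset β)] with s hs
    exact (Finset.prod_eq_zero (hs (Finset.mem_singleton_self b)) h).symm
  exact tendsto_const_nhds.congr' hev

lemma multipliable_one_sub {u : ℕ → ℂ} (hu : Summable u) :
    Multipliable fun n => 1 - u n := by
  by_cases h : ∃ n, 1 - u n = 0
  · obtain ⟨n, hn⟩ := h
    exact ⟨0, hasProd_zero_of_eq_zero hn⟩
  push_neg at h
  refine Complex.multipliable_of_summable_log ?_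
  have h0 : Filter.Tendsto u Filter.atTop (nhds 0) := hu.tendsto_atTop_zero
  refine Summable.of_norm_bounded_eventually_nat (g := fun n => 3 / 2 * ‖u n‖)
    (hu.norm.mul_left _) ?_
  filter_upwards [h0.eventually (Metric.ball_mem_nhds 0 (by norm_num : (0:ℝ) < 1/2))] with n hn
  have hle : ‖-u n‖ ≤ 1 / 2 := by
    rw [norm_neg]
    simpa [dist_eq_norm] using hn.le
  simpa [sub_eq_add_neg, norm_neg] using Complex.norm_log_one_add_half_le_self hle

lemma jacobiThetaProd_eq (τ z : ℂ) :
    jacobiThetaProd τ z = Complex.exp (Real.pi * I * τ / 2) *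
      (2 * Complex.sin (Real.pi * z)) *
      ∏' n : ℕ, ((1 - Complex.exp (2 * Real.pi * I * τ) ^ (n + 1)) *
        (1 - Complex.exp (2 * Real.pi * I * τ) ^ (n + 1) * Complex.exp (2 * Real.pi * I * z)) *
        (1 - Complex.exp (2 * Real.pi * I * τ) ^ (n + 1) *
          (Complex.exp (2 * Real.pi * I * z))⁻¹)) := by
  rw [jacobiThetaProd, ← Equiv.tprod_eq Equiv.pnatEquivNat.symm]
  refine congrArg _ (tprod_congr fun n => ?_)
  have hc : ((Equiv.pnatEquivNat.symm n : ℕ+) : ℕ) = n + 1 := rfl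
  rw [hc]
  have e1 : Complex.exp (2 * Real.pi * I * ((n : ℕ) + 1 : ℕ) * τ)
      = Complex.exp (2 * Real.pi * I * τ) ^ (n + 1) := by
    rw [← Complex.exp_nat_mul]; congr 1; push_cast; ring
  have e2 : Complex.exp (2 * Real.pi * I * (((n : ℕ) + 1 : ℕ) * τ + z))
      = Complex.exp (2 * Real.pi * I * τ) ^ (n + 1) * Complex.exp (2 * Real.pi * I * z) := by
    rw [← Complex.exp_nat_mul, ← Complex.exp_add]; congr 1; push_cast; ring
  have e3 : Complex.exp (2 * Real.pi * I * (((n : ℕ) + 1 : ℕ) * τ - z))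
      = Complex.exp (2 * Real.pi * I * τ) ^ (n + 1) * (Complex.exp (2 * Real.pi * I * z))⁻¹ := by
    rw [← Complex.exp_nat_mul, ← Complex.exp_neg, ← Complex.exp_add]; congr 1; push_cast; ring
  rw [e1, e2, e3]

lemma jacobiThetaProd_add_one (τ z : ℂ) :
    jacobiThetaProd τ (z + 1) = -jacobiThetaProd τ z := by
  rw [jacobiThetaProd_eq, jacobiThetaProd_eq]
  have hx : Complex.exp (2 * Real.pi * I * (z + 1)) = Complex.exp (2 * Real.pi * I * z) := by
    rw [show 2 * (Real.pi : ℂ) * I * (z + 1) = 2 * Real.pi * I * z + 2 * Real.pi * I by ring,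
      Complex.exp_add, Complex.exp_two_pi_mul_I, mul_one]
  have hsin : Complex.sin (Real.pi * (z + 1)) = -Complex.sin (Real.pi * z) := by
    rw [show (Real.pi : ℂ) * (z + 1) = Real.pi * z + Real.pi by ring, Complex.sin_add,
      Complex.sin_pi, Complex.cos_pi]
    ring
  rw [hx, hsin]
  ring

lemma jacobiThetaProd_add_tau (τ : ℂ) (hτ : 0 < τ.im) (z : ℂ) :
    jacobiThetaProd τ (z + τ) =
      -Complex.exp (-(Real.pi * I * τ) - 2 * Real.pi * I * z) * jacobiThetaProd τ z := by
  set q : ℂ := Complex.exp (2 * Real.pi * I * τ) with hqdef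
  set x : ℂ := Complex.exp (2 * Real.pi * I * z) with hxdef
  have hq0 : q ≠ 0 := Complex.exp_ne_zero _
  have hx0 : x ≠ 0 := Complex.exp_ne_zero _
  have hq : ‖q‖ < 1 := by
    rw [hqdef, Complex.norm_exp]
    rw [Real.exp_lt_one_iff]
    have hre : (2 * (Real.pi : ℂ) * I * τ).re = -(2 * Real.pi * τ.im) := by
      simp [Complex.mul_re, Complex.mul_im]
    rw [hre]
    have : 0 < 2 * Real.pi * τ.im := by positivity
    linarith
  have hgeo : Summable fun n : ℕ => q ^ n := summable_geometric_of_norm_lt_one hq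
  have hsum : ∀ (c : ℂ) (k : ℕ), Summable fun n : ℕ => q ^ (n + k) * c := by
    intro c k
    exact ((hgeo.mul_right c).comp_injective (add_left_injective k))
  have MA : Multipliable fun n : ℕ => 1 - q ^ (n + 1) := by
    have := multipliable_one_sub (hsum 1 1)
    simpa using this
  have MB : Multipliable fun n : ℕ => 1 - q ^ (n + 1) * x := multipliable_one_sub (hsum x 1)
  have MB2 : Multipliable fun n : ℕ => 1 - q ^ (n + 2) * x := multipliable_one_sub (hsum x 2)
  have MC : Multipliable fun n : ℕ => 1 - q ^ (n + 1) * x⁻¹ := multipliable_one_sub (hsum x⁻¹ 1)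
  have MC0 : Multipliable fun n : ℕ => 1 - q ^ n * x⁻¹ := by
    have := multipliable_one_sub (hsum x⁻¹ 0)
    simpa using this
  rw [jacobiThetaProd_eq, jacobiThetaProd_eq]
  have hx' : Complex.exp (2 * Real.pi * I * (z + τ)) = q * x := by
    rw [hqdef, hxdef, ← Complex.exp_add]; congr 1; ring
  rw [hx']
  have hterm : (fun n : ℕ => (1 - q ^ (n + 1)) * (1 - q ^ (n + 1) * (q * x)) *
      (1 - q ^ (n + 1) * (q * x)⁻¹)) =
      fun n : ℕ => (1 - q ^ (n + 1)) * (1 - q ^ (n + 2) * x) * (1 - q ^ n * x⁻¹) := by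
    funext n
    have h1 : q ^ (n + 1) * (q * x) = q ^ (n + 2) * x := by ring
    have h2 : q ^ (n + 1) * (q * x)⁻¹ = q ^ n * x⁻¹ := by
      rw [mul_inv]
      field_simp
      ring
    rw [h1, h2]
  rw [hterm]
  rw [Multipliable.tprod_mul (MA.mul MB2) MC0, Multipliable.tprod_mul MA MB2,
    Multipliable.tprod_mul (MA.mul MB) MC, Multipliable.tprod_mul MA MB]
  have hB : (∏' n : ℕ, (1 - q ^ (n + 1) * x)) =
      (1 - q ^ (0 + 1) * x) * ∏' n : ℕ, (1 - q ^ (n + 1 + 1) * x) :=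
    tprod_eq_zero_mul' (by exact MB2)
  have hC : (∏' n : ℕ, (1 - q ^ n * x⁻¹)) =
      (1 - q ^ 0 * x⁻¹) * ∏' n : ℕ, (1 - q ^ (n + 1) * x⁻¹) :=
    tprod_eq_zero_mul' (by exact MC)
  rw [hB, hC]
  have hB2eq : (∏' n : ℕ, (1 - q ^ (n + 1 + 1) * x)) = ∏' n : ℕ, (1 - q ^ (n + 2) * x) := rfl
  rw [hB2eq]
  have hs : 2 * Complex.sin (Real.pi * (z + τ)) * (1 - q ^ 0 * x⁻¹) =
      -Complex.exp (-(Real.pi * I * τ) - 2 * Real.pi * I * z) *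
        (2 * Complex.sin (Real.pi * z)) * (1 - q ^ (0 + 1) * x) := by
    have e5 : x = Complex.exp (Real.pi * I * z) ^ 2 := by
      rw [hxdef, sq, ← Complex.exp_add]; congr 1; ring
    have e6 : q = Complex.exp (Real.pi * I * τ) ^ 2 := by
      rw [hqdef, sq, ← Complex.exp_add]; congr 1; ring
    have e7 : Complex.exp (-(Real.pi * I * τ) - 2 * Real.pi * I * z) =
        (Complex.exp (Real.pi * I * τ) * Complex.exp (Real.pi * I * z) ^ 2)⁻¹ := by
      rw [sq, ← Complex.exp_add, ← Complex.exp_add, ← Complex.exp_neg]; congr 1; ring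
    have e1 : Complex.exp (-((Real.pi : ℂ) * (z + τ)) * I) =
        (Complex.exp (Real.pi * I * z) * Complex.exp (Real.pi * I * τ))⁻¹ := by
      rw [← Complex.exp_add, ← Complex.exp_neg]; congr 1; ring
    have e2 : Complex.exp (((Real.pi : ℂ) * (z + τ)) * I) =
        Complex.exp (Real.pi * I * z) * Complex.exp (Real.pi * I * τ) := by
      rw [← Complex.exp_add]; congr 1; ring
    have e3 : Complex.exp (-((Real.pi : ℂ) * z) * I) = (Complex.exp (Real.pi * I * z))⁻¹ := by
      rw [← Complex.exp_neg]; congr 1; ring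
    have e4 : Complex.exp (((Real.pi : ℂ) * z) * I) = Complex.exp (Real.pi * I * z) := by
      congr 1; ring
    have hE : Complex.exp (Real.pi * I * z) ≠ 0 := Complex.exp_ne_zero _
    have hT : Complex.exp (Real.pi * I * τ) ≠ 0 := Complex.exp_ne_zero _
    rw [Complex.sin, Complex.sin, e1, e2, e3, e4, e5, e6, e7]
    field_simp
    ring
  linear_combination (Complex.exp ((Real.pi : ℂ) * I * τ / 2) *
    (∏' n : ℕ, (1 - q ^ (n + 1))) * (∏' n : ℕ, (1 - q ^ (n + 2) * x)) *
    (∏' n : ℕ, (1 - q ^ (n + 1) * x⁻¹))) * hs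

lemma zpow_sum' {α : Type*} (a : ℂ) (ha : a ≠ 0) (s : Finset α) (g : α → ℤ) :
    a ^ (∑ i ∈ s, g i) = ∏ i ∈ s, a ^ g i := by
  classical
  induction s using Finset.induction_on with
  | empty => simp
  | insert _ _ h ih =>
    rw [Finset.sum_insert h, Finset.prod_insert h, zpow_add₀ ha, ih]

/-- If `∑ m k = 0` and `∑ m k • z k = 0`, then `f(w) = ∏_k θ(w − z k)^{m k}` is doubly
periodic with respect to `1` and `τ`, i.e. an elliptic function for the lattice `ℤ + ℤτ`. -/
theorem prod_jacobiThetaProd_zpow_doubly_periodic (τ : ℂ) (hτ : 0 < τ.im)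
    (r : ℕ) (z : Fin r → ℂ) (m : Fin r → ℤ)
    (hm : ∑ k, m k = 0) (hmz : ∑ k, (m k : ℂ) * z k = 0)
    (f : ℂ → ℂ) (hf : f = fun w => ∏ k, jacobiThetaProd τ (w - z k) ^ (m k)) :
    ∀ w : ℂ, f (w + 1) = f w ∧ f (w + τ) = f w := by
  subst hf
  intro w
  constructor
  · simp only
    calc ∏ k, jacobiThetaProd τ (w + 1 - z k) ^ m k
        = ∏ k, ((-1 : ℂ) ^ m k * jacobiThetaProd τ (w - z k) ^ m k) := by
          refine Finset.prod_congr rfl fun k _ => ?_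
          rw [show w + 1 - z k = (w - z k) + 1 by ring, jacobiThetaProd_add_one,
            show -jacobiThetaProd τ (w - z k) = (-1) * jacobiThetaProd τ (w - z k) by ring,
            mul_zpow]
      _ = (∏ k, ((-1 : ℂ) ^ m k)) * ∏ k, jacobiThetaProd τ (w - z k) ^ m k :=
          Finset.prod_mul_distrib
      _ = ∏ k, jacobiThetaProd τ (w - z k) ^ m k := by
          rw [← zpow_sum' (-1 : ℂ) (by norm_num), hm, zpow_zero, one_mul]
  · simp only
    calc ∏ k, jacobiThetaProd τ (w + τ - z k) ^ m k
        = ∏ k, (((-1 : ℂ) * Complex.exp (-(Real.pi * I * τ) - 2 * Real.pi * I * (w - z k))) ^ m k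
            * jacobiThetaProd τ (w - z k) ^ m k) := by
          refine Finset.prod_congr rfl fun k _ => ?_
          rw [show w + τ - z k = (w - z k) + τ by ring, jacobiThetaProd_add_tau τ hτ,
            show -Complex.exp (-(Real.pi * I * τ) - 2 * Real.pi * I * (w - z k)) *
                jacobiThetaProd τ (w - z k) =
              ((-1) * Complex.exp (-(Real.pi * I * τ) - 2 * Real.pi * I * (w - z k))) *
                jacobiThetaProd τ (w - z k) by ring, mul_zpow]
      _ = (∏ k, ((-1 : ℂ) * Complex.exp (-(Real.pi * I * τ) - 2 * Real.pi * I * (w - z k))) ^ m k)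
            * ∏ k, jacobiThetaProd τ (w - z k) ^ m k := Finset.prod_mul_distrib
      _ = ∏ k, jacobiThetaProd τ (w - z k) ^ m k := by
          have hprod : (∏ k, ((-1 : ℂ) *
              Complex.exp (-(Real.pi * I * τ) - 2 * Real.pi * I * (w - z k))) ^ m k) = 1 := by
            have h1 : ∀ k : Fin r, ((-1 : ℂ) *
                Complex.exp (-(Real.pi * I * τ) - 2 * Real.pi * I * (w - z k))) ^ m k =
                (-1 : ℂ) ^ m k *
                  Complex.exp ((m k : ℂ) * (-(Real.pi * I * τ) - 2 * Real.pi * I * (w - z k))) := by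
              intro k
              rw [mul_zpow, Complex.exp_int_mul]
            simp_rw [h1]
            rw [Finset.prod_mul_distrib, ← zpow_sum' (-1 : ℂ) (by norm_num), hm, zpow_zero,
              one_mul, ← Complex.exp_sum]
            have : ∑ k, (m k : ℂ) * (-(Real.pi * I * τ) - 2 * Real.pi * I * (w - z k)) = 0 := by
              have hmC : ((∑ k, m k : ℤ) : ℂ) = 0 := by rw [hm]; norm_num
              push_cast at hmC
              have expand : ∑ k, (m k : ℂ) * (-(Real.pi * I * τ) - 2 * Real.pi * I * (w - z k)) =
                  (-(Real.pi * I * τ) - 2 * Real.pi * I * w) * (∑ k, (m k : ℂ)) +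
                    2 * Real.pi * I * (∑ k, (m k : ℂ) * z k) := by
                rw [Finset.mul_sum, Finset.mul_sum, ← Finset.sum_add_distrib]
                refine Finset.sum_congr rfl fun k _ => ?_
                ring
              rw [expand, hmC, hmz]
              ring
            rw [this, Complex.exp_zero]
          rw [hprod, one_mul]
end

section
/- Let A be a commutative ℂ-algebra which is finitely generated as a ℂ-algebra, and let G be a finite group acting on A by ℂ-algebra automorphisms. Then the invariant subalgebra A^G = {a ∈ A : g • a = a for all g ∈ G} is a finitely generated ℂ-algebra. -/
/-- The invariant subalgebra `A^G` of a `ℂ`-algebra `A` under an action of a group `G`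
by `ℂ`-algebra automorphisms. -/
def invariantSubalgebra (G A : Type*) [CommRing A] [Algebra ℂ A] [Group G]
    [MulSemiringAction G A] [SMulCommClass G ℂ A] : Subalgebra ℂ A where
  carrier := {a : A | ∀ g : G, g • a = a}
  mul_mem' := by
    intro a b ha hb g
    rw [smul_mul', ha g, hb g]
  add_mem' := by
    intro a b ha hb g
    rw [smul_add, ha g, hb g]
  algebraMap_mem' := by
    intro c g
    rw [Algebra.algebraMap_eq_smul_one, smul_comm g c (1 : A), smul_one]

/-- **Noether's finiteness theorem.** If `A` is a finitely generated commutative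
`ℂ`-algebra and a finite group `G` acts on `A` by `ℂ`-algebra automorphisms, then the
invariant subalgebra `A^G` is a finitely generated `ℂ`-algebra. -/
theorem invariantSubalgebra_finiteType (G A : Type*) [CommRing A] [Algebra ℂ A]
    [Group G] [Finite G] [MulSemiringAction G A] [SMulCommClass G ℂ A]
    (hA : Algebra.FiniteType ℂ A) :
    Algebra.FiniteType ℂ (invariantSubalgebra G A) := by
  cases nonempty_fintype G
  set B := invariantSubalgebra G A with hB
  -- A is integral over B
  have hint : Algebra.IsIntegral B A := by
    constructor
    intro x
    refine ⟨(prodXSubSMul G A x).toSubring B.toSubring (fun c hc => Subalgebra.mem_toSubring.2 (show c ∈ invariantSubalgebra G A from fun g => ?_)), ?_, ?_⟩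
    · obtain ⟨n, _, hn⟩ := Polynomial.mem_coeffs_iff.1 hc
      exact hn.symm ▸ prodXSubSMul.coeff G A x g n
    · erw [Polynomial.monic_toSubring]
      exact prodXSubSMul.monic G A x
    · rw [← prodXSubSMul.eval G A x, Polynomial.eval₂_eq_eval_map]
      erw [show (algebraMap B A : B →+* A) = B.toSubring.subtype from rfl,
        Polynomial.map_toSubring]
  -- A is a finite type B-algebra
  have hft : Algebra.FiniteType B A :=
    Algebra.FiniteType.of_restrictScalars_finiteType (R := ℂ) (S := B) (A := A)
  have hfin : Module.Finite B A := Algebra.IsIntegral.finite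
  refine ⟨fg_of_fg_of_fg ℂ B A ?_ hfin.fg_top Subtype.val_injective⟩
  exact hA.out
end

section
/- Let A be a nontrivial commutative ℂ-algebra and let G be a finite group acting on A by ℂ-algebra automorphisms, with invariant subalgebra A^G. Then: (i) for every maximal ideal m of A, the contraction m ∩ A^G is a maximal ideal of A^G; (ii) every maximal ideal of A^G is of the form m ∩ A^G for some maximal ideal m of A; and (iii) for maximal ideals m₁, m₂ of A, m₁ ∩ A^G = m₂ ∩ A^G if and only if m₂ = g • m₁ for some g ∈ G. In other words, maximal ideals of A^G are in natural bijection with G-orbits of maximal ideals of A. -/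
open Pointwise

section Aux

variable (G A : Type*) [CommRing A] [Algebra ℂ A] [Group G]
    [MulSemiringAction G A] [SMulCommClass G ℂ A]

lemma invariantSubalgebra_isIntegral [Finite G] :
    Algebra.IsIntegral ↥(invariantSubalgebra G A) A := by
  cases nonempty_fintype G
  constructor
  intro x
  refine ⟨(prodXSubSMul G A x).toSubring (invariantSubalgebra G A).toSubring ?_, ?_, ?_⟩
  · intro c hc
    obtain ⟨n, -, hn⟩ := Polynomial.mem_coeffs_iff.1 hc
    exact fun g => hn ▸ prodXSubSMul.coeff G A x g n
  · erw [Polynomial.monic_toSubring]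
    exact prodXSubSMul.monic G A x
  · have h : algebraMap ↥(invariantSubalgebra G A) A =
        ((invariantSubalgebra G A).toSubring).subtype := rfl
    rw [h, Polynomial.eval₂_eq_eval_map]
    erw [Polynomial.map_toSubring]
    exact prodXSubSMul.eval G A x

lemma comap_val_eq (m : Ideal A) :
    m.comap (invariantSubalgebra G A).val =
      m.comap (algebraMap ↥(invariantSubalgebra G A) A) := rfl

variable {G A} in
lemma smul_ideal_isPrime (g : G) (m : Ideal A) [m.IsPrime] : (g • m : Ideal A).IsPrime := by
  rw [Ideal.pointwise_smul_eq_comap]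
  exact Ideal.IsPrime.comap _

end Aux

/-- Maximal ideals of the invariant ring `A^G` are in natural bijection with `G`-orbits of
maximal ideals of `A`: (i) contractions of maximal ideals are maximal; (ii) every maximal
ideal of `A^G` is a contraction; (iii) two maximal ideals of `A` have the same contraction
iff they are in the same `G`-orbit. -/
theorem invariantSubalgebra_maximal_ideals (G A : Type*) [CommRing A] [Nontrivial A]
    [Algebra ℂ A] [Group G] [Finite G] [MulSemiringAction G A] [SMulCommClass G ℂ A] :
    (∀ m : Ideal A, m.IsMaximal →
        (m.comap (invariantSubalgebra G A).val).IsMaximal) ∧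
    (∀ M : Ideal (invariantSubalgebra G A), M.IsMaximal →
        ∃ m : Ideal A, m.IsMaximal ∧ M = m.comap (invariantSubalgebra G A).val) ∧
    (∀ m₁ m₂ : Ideal A, m₁.IsMaximal → m₂.IsMaximal →
        (m₁.comap (invariantSubalgebra G A).val = m₂.comap (invariantSubalgebra G A).val ↔
          ∃ g : G, (m₂ : Set A) = (fun a => g • a) '' (m₁ : Set A))) := by
  cases nonempty_fintype G
  haveI := invariantSubalgebra_isIntegral G A
  refine ⟨?_, ?_, ?_⟩
  · intro m hm
    rw [comap_val_eq]
    exact Ideal.isMaximal_comap_of_isIntegral_of_isMaximal m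
  · intro M hM
    have hker : RingHom.ker (algebraMap ↥(invariantSubalgebra G A) A) ≤ M := by
      rw [show RingHom.ker (algebraMap ↥(invariantSubalgebra G A) A) = ⊥ from
        (RingHom.injective_iff_ker_eq_bot _).1 Subtype.val_injective]
      exact bot_le
    obtain ⟨m, hm, hcm⟩ := Ideal.exists_ideal_over_maximal_of_isIntegral M hker
    exact ⟨m, hm, by rw [comap_val_eq, hcm]⟩
  · intro m₁ m₂ hm₁ hm₂
    constructor
    · intro h
      have hsub : (m₂ : Set A) ⊆ ⋃ g ∈ ((Finset.univ : Finset G) : Set G), ((g • m₁ : Ideal A) : Set A) := by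
        intro x hx
        have hyinv : ∀ h : G, h • (∏ g : G, g • x) = ∏ g : G, g • x := by
          intro h
          rw [Finset.smul_prod']
          exact Fintype.prod_bijective (fun g => h * g)
            (Group.mulLeft_bijective h) _ _ (fun g => (mul_smul h g x).symm)
        have hy2 : (∏ g : G, g • x) ∈ m₂ := by
          classical
          rw [← Finset.mul_prod_erase Finset.univ _ (Finset.mem_univ (1 : G)), one_smul]
          exact m₂.mul_mem_right _ hx
        have hy1 : (∏ g : G, g • x) ∈ m₁ := by
          have : (⟨∏ g : G, g • x, hyinv⟩ : ↥(invariantSubalgebra G A)) ∈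
              m₂.comap (invariantSubalgebra G A).val := hy2
          rw [← h] at this
          exact this
        haveI := hm₁.isPrime
        obtain ⟨g, -, hg⟩ := Ideal.IsPrime.prod_mem_iff.1 hy1
        refine Set.mem_biUnion (Finset.mem_coe.2 (Finset.mem_univ g⁻¹)) ?_
        rw [SetLike.mem_coe, Ideal.mem_pointwise_smul_iff_inv_smul_mem, inv_inv]
        exact hg
      haveI := hm₁.isPrime
      obtain ⟨g, -, hle⟩ := (Ideal.subset_union_prime (1 : G) (1 : G)
        (fun g _ _ _ => smul_ideal_isPrime g m₁)).1 hsub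
      have hne : (g • m₁ : Ideal A) ≠ ⊤ := by
        intro htop
        apply hm₁.ne_top
        rw [Ideal.eq_top_iff_one]
        have : (1 : A) ∈ (g • m₁ : Ideal A) := htop ▸ Submodule.mem_top
        rw [Ideal.mem_pointwise_smul_iff_inv_smul_mem, smul_one] at this
        exact this
      have heq : m₂ = g • m₁ := hm₂.eq_of_le hne hle
      refine ⟨g, ?_⟩
      ext a
      constructor
      · intro ha
        rw [heq] at ha
        rw [SetLike.mem_coe, Ideal.mem_pointwise_smul_iff_inv_smul_mem] at ha
        exact ⟨g⁻¹ • a, ha, smul_inv_smul g a⟩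
      · rintro ⟨b, hb, rfl⟩
        rw [heq, SetLike.mem_coe]
        exact Ideal.smul_mem_pointwise_smul g b m₁ hb
    · rintro ⟨g, hset⟩
      ext x
      simp only [Ideal.mem_comap]
      constructor
      · intro hx
        have : (invariantSubalgebra G A).val x ∈ (m₂ : Set A) := by
          rw [hset]
          exact ⟨x, hx, x.2 g⟩
        exact this
      · intro hx
        have : (invariantSubalgebra G A).val x ∈ (fun a => g • a) '' (m₁ : Set A) := by
          rw [← hset]; exact hx
        obtain ⟨b, hb, hgb⟩ := this
        have : b = (invariantSubalgebra G A).val x := by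
          have := congrArg (fun a => g⁻¹ • a) hgb
          simpa [inv_smul_smul, x.2 g⁻¹] using this
        rwa [this] at hb
end

section
/- Let n ≥ 1 and let ζ ∈ ℂ be a primitive n-th root of unity. Let g be the ℂ-algebra automorphism of ℂ[x,y] = MvPolynomial (Fin 2) ℂ determined by g(x) = ζ·x and g(y) = ζ⁻¹·y. Then the fixed subalgebra {p ∈ ℂ[x,y] : g(p) = p} equals the ℂ-subalgebra generated by xⁿ, yⁿ and x·y, i.e. Algebra.adjoin ℂ {xⁿ, yⁿ, x·y}. -/
open MvPolynomial

private lemma monomial_eq_two (d : Fin 2 →₀ ℕ) (c : ℂ) :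
    (monomial d c : MvPolynomial (Fin 2) ℂ) = C c * X 0 ^ d 0 * X 1 ^ d 1 := by
  have hd : d = Finsupp.single 0 (d 0) + Finsupp.single 1 (d 1) := by
    ext i; fin_cases i <;> simp [Finsupp.single_apply]
  rw [X_pow_eq_monomial, X_pow_eq_monomial, C_mul_monomial, monomial_mul]
  conv_lhs => rw [hd]
  ring_nf

private lemma aeval_monomial_diag (ζ : ℂ) (d : Fin 2 →₀ ℕ) (c : ℂ) :
    aeval ![C ζ * X 0, C ζ⁻¹ * X 1] (monomial d c : MvPolynomial (Fin 2) ℂ) =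
      monomial d (ζ ^ d 0 * ζ⁻¹ ^ d 1 * c) := by
  rw [monomial_eq_two, monomial_eq_two]
  rw [map_mul, map_mul, map_pow, map_pow, aeval_C, aeval_X, aeval_X]
  simp only [Matrix.cons_val_zero, Matrix.cons_val_one, Matrix.head_cons, algebraMap_eq]
  rw [mul_pow, mul_pow, ← C_pow, ← C_pow, C_mul, C_mul]
  ring

private lemma coeff_aeval_diag (ζ : ℂ) (p : MvPolynomial (Fin 2) ℂ) (d : Fin 2 →₀ ℕ) :
    coeff d (aeval ![C ζ * X 0, C ζ⁻¹ * X 1] p) = ζ ^ d 0 * ζ⁻¹ ^ d 1 * coeff d p := by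
  conv_lhs => rw [p.as_sum, map_sum]
  rw [coeff_sum]
  simp only [aeval_monomial_diag, coeff_monomial]
  rw [Finset.sum_ite_eq' p.support d]
  by_cases h : d ∈ p.support
  · simp [h]
  · simp [h, MvPolynomial.notMem_support_iff.mp h]

/-- The fixed subalgebra of the cyclic action `x ↦ ζx`, `y ↦ ζ⁻¹y` on `ℂ[x,y]`, for `ζ` a
primitive `n`-th root of unity, is generated by `xⁿ`, `yⁿ` and `x·y`. -/
theorem fixed_subalgebra_cyclic_action (n : ℕ) (hn : 1 ≤ n) (ζ : ℂ)
    (hζ : IsPrimitiveRoot ζ n) :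
    {p : MvPolynomial (Fin 2) ℂ |
        aeval ![C ζ * X 0, C ζ⁻¹ * X 1] p = p} =
      ↑(Algebra.adjoin ℂ
        {(X 0 : MvPolynomial (Fin 2) ℂ) ^ n, (X 1 : MvPolynomial (Fin 2) ℂ) ^ n,
          (X 0 : MvPolynomial (Fin 2) ℂ) * X 1}) := by
  have hn0 : n ≠ 0 := by omega
  have hζn : ζ ^ n = 1 := hζ.pow_eq_one
  have hζ0 : ζ ≠ 0 := fun h => by simp [h, zero_pow hn0] at hζn
  set S := Algebra.adjoin ℂ
      {(X 0 : MvPolynomial (Fin 2) ℂ) ^ n, (X 1 : MvPolynomial (Fin 2) ℂ) ^ n,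
        (X 0 : MvPolynomial (Fin 2) ℂ) * X 1} with hS
  -- membership of monomials with congruent exponents
  have mono_mem : ∀ (c : ℂ) (a b : ℕ), a % n = b % n →
      (C c : MvPolynomial (Fin 2) ℂ) * X 0 ^ a * X 1 ^ b ∈ S := by
    intro c a b hab
    have hx : (X 0 : MvPolynomial (Fin 2) ℂ) ^ n ∈ S :=
      Algebra.subset_adjoin (by simp)
    have hy : (X 1 : MvPolynomial (Fin 2) ℂ) ^ n ∈ S :=
      Algebra.subset_adjoin (by simp)
    have hxy : (X 0 : MvPolynomial (Fin 2) ℂ) * X 1 ∈ S :=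
      Algebra.subset_adjoin (by simp)
    rcases le_total a b with h | h
    · obtain ⟨k, hk⟩ := (Nat.modEq_iff_dvd' h).mp hab
      have hb : b = a + n * k := by omega
      have : (C c : MvPolynomial (Fin 2) ℂ) * X 0 ^ a * X 1 ^ b =
          C c * (X 0 * X 1) ^ a * (X 1 ^ n) ^ k := by
        rw [hb]; ring
      rw [this]
      exact mul_mem (mul_mem (S.algebraMap_mem c) (pow_mem hxy a)) (pow_mem hy k)
    · obtain ⟨k, hk⟩ := (Nat.modEq_iff_dvd' h).mp hab.symm
      have ha : a = b + n * k := by omega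
      have : (C c : MvPolynomial (Fin 2) ℂ) * X 0 ^ a * X 1 ^ b =
          C c * (X 0 * X 1) ^ b * (X 0 ^ n) ^ k := by
        rw [ha]; ring
      rw [this]
      exact mul_mem (mul_mem (S.algebraMap_mem c) (pow_mem hxy b)) (pow_mem hx k)
  ext p
  simp only [Set.mem_setOf_eq, SetLike.mem_coe]
  constructor
  · intro hp
    rw [p.as_sum]
    apply Subalgebra.sum_mem
    intro d hd
    rw [monomial_eq_two]
    apply mono_mem
    -- derive congruence from fixedness
    have hc := coeff_aeval_diag ζ p d
    rw [hp] at hc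
    have hne : coeff d p ≠ 0 := MvPolynomial.mem_support_iff.mp hd
    have h1 : ζ ^ d 0 * ζ⁻¹ ^ d 1 = 1 :=
      mul_right_cancel₀ hne (hc.symm.trans (one_mul (coeff d p)).symm)
    have h2 : ζ ^ d 0 = ζ ^ d 1 := by
      rw [inv_pow] at h1
      field_simp at h1
      exact h1
    rcases le_total (d 0) (d 1) with h | h
    · apply (Nat.modEq_iff_dvd' h).mpr
      apply (hζ.pow_eq_one_iff_dvd _).mp
      have : ζ ^ d 1 = ζ ^ d 0 * ζ ^ (d 1 - d 0) := by
        rw [← pow_add]; congr 1; omega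
      rw [this] at h2
      field_simp at h2
      exact h2.symm
    · apply Nat.ModEq.symm
      apply (Nat.modEq_iff_dvd' h).mpr
      apply (hζ.pow_eq_one_iff_dvd _).mp
      have : ζ ^ d 0 = ζ ^ d 1 * ζ ^ (d 0 - d 1) := by
        rw [← pow_add]; congr 1; omega
      rw [this] at h2
      field_simp at h2
      exact h2
  · intro hp
    induction hp using Algebra.adjoin_induction with
    | mem x hx =>
      rcases hx with h | h | h <;> subst h
      · rw [map_pow, aeval_X]
        simp only [Matrix.cons_val_zero]
        rw [mul_pow, ← C_pow, hζn, C_1, one_mul]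
      · rw [map_pow, aeval_X]
        simp only [Matrix.cons_val_one, Matrix.head_cons, Matrix.cons_val_zero]
        rw [mul_pow, ← C_pow, inv_pow, hζn, inv_one, C_1, one_mul]
      · rw [map_mul, aeval_X, aeval_X]
        simp only [Matrix.cons_val_zero, Matrix.cons_val_one, Matrix.head_cons]
        rw [mul_mul_mul_comm, ← C_mul, mul_inv_cancel₀ hζ0, C_1, one_mul]
    | algebraMap r => simp [algebraMap_eq]
    | add x y _ _ hx hy => rw [map_add, hx, hy]
    | mul x y _ _ hx hy => rw [map_mul, hx, hy]
end

section
/- (Gordan's lemma) Let v₁, …, v_k ∈ ℤⁿ and let σ = {∑_{i=1}^k c_i v_i : c_i ∈ ℝ, c_i ≥ 0} ⊆ ℝⁿ be the convex cone they span. Then the set σ ∩ ℤⁿ = {m ∈ ℤⁿ : the image of m in ℝⁿ lies in σ}, which is an additive submonoid of ℤⁿ, is finitely generated as an additive monoid. -/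
/-- **Gordan's lemma.** Let `σ ⊆ ℝⁿ` be the convex cone spanned by finitely many lattice
vectors `v₁, …, v_k ∈ ℤⁿ`. Then the additive monoid `σ ∩ ℤⁿ` of lattice points of `σ` is
finitely generated: it is the additive-submonoid closure of a finite set. -/
theorem gordan_lemma (n k : ℕ) (v : Fin k → Fin n → ℤ) :
    ∃ S : Finset (Fin n → ℤ),
      {m : Fin n → ℤ | ∃ c : Fin k → ℝ, (∀ i, 0 ≤ c i) ∧
          (fun j => (m j : ℝ)) = ∑ i, c i • (fun j => (v i j : ℝ))} =
        ↑(AddSubmonoid.closure (S : Set (Fin n → ℤ))) := by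
  classical
  set σZ : Set (Fin n → ℤ) := {m | ∃ c : Fin k → ℝ, (∀ i, 0 ≤ c i) ∧
      (fun j => (m j : ℝ)) = ∑ i, c i • (fun j => (v i j : ℝ))} with hσZ
  set B : Fin n → ℤ := fun j => ∑ i, |v i j| with hB
  set T : Set (Fin n → ℤ) := {m | m ∈ σZ ∧ ∀ j, |m j| ≤ B j} with hT
  have hTfin : T.Finite := by
    apply Set.Finite.subset
      (Set.Finite.pi (fun j : Fin n => Set.finite_Icc (-(B j)) (B j)))
    intro m hm
    simp only [Set.mem_pi, Set.mem_univ, Set.mem_Icc, forall_true_left]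
    intro j
    exact abs_le.mp (hm.2 j)
  refine ⟨hTfin.toFinset, ?_⟩
  rw [Set.Finite.coe_toFinset]
  -- membership in σZ expressed coordinatewise
  have hmemσ : ∀ m : Fin n → ℤ, m ∈ σZ ↔ ∃ c : Fin k → ℝ, (∀ i, 0 ≤ c i) ∧
      ∀ j, (m j : ℝ) = ∑ i, c i * (v i j : ℝ) := by
    intro m
    constructor
    · rintro ⟨c, hc, heq⟩
      refine ⟨c, hc, fun j => ?_⟩
      have := congrFun heq j
      simpa [Finset.sum_apply] using this
    · rintro ⟨c, hc, heq⟩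
      refine ⟨c, hc, funext fun j => ?_⟩
      simpa [Finset.sum_apply] using heq j
  apply Set.eq_of_subset_of_subset
  · -- σZ ⊆ closure T
    intro m hm
    obtain ⟨c, hc, heq⟩ := (hmemσ m).1 hm
    set d : Fin k → ℕ := fun i => ⌊c i⌋₊ with hd
    set r : Fin n → ℤ := m - ∑ i, (d i : ℤ) • v i with hr
    have hrcoord : ∀ j, (r j : ℝ) = ∑ i, (c i - (d i : ℝ)) * (v i j : ℝ) := by
      intro j
      have : r j = m j - ∑ i, (d i : ℤ) * v i j := by
        simp [hr, Finset.sum_apply]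
      rw [this]
      push_cast
      rw [heq j, ← Finset.sum_sub_distrib]
      congr 1
      ext i
      ring
    have hfrac : ∀ i, 0 ≤ c i - (d i : ℝ) ∧ c i - (d i : ℝ) < 1 := by
      intro i
      constructor
      · have := Nat.floor_le (hc i)
        linarith
      · have := Nat.lt_floor_add_one (c i)
        linarith
    have hrT : r ∈ T := by
      constructor
      · exact (hmemσ r).2 ⟨fun i => c i - (d i : ℝ), fun i => (hfrac i).1,
          fun j => hrcoord j⟩
      · intro j
        have hreal : |(r j : ℝ)| ≤ (B j : ℝ) := by
          rw [hrcoord j]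
          calc |∑ i, (c i - (d i : ℝ)) * (v i j : ℝ)|
              ≤ ∑ i, |(c i - (d i : ℝ)) * (v i j : ℝ)| := Finset.abs_sum_le_sum_abs _ _
            _ ≤ ∑ i, |(v i j : ℝ)| := by
                apply Finset.sum_le_sum
                intro i _
                rw [abs_mul]
                have h1 : |c i - (d i : ℝ)| ≤ 1 := by
                  rw [abs_of_nonneg (hfrac i).1]
                  exact le_of_lt (hfrac i).2
                calc |c i - (d i : ℝ)| * |(v i j : ℝ)|
                    ≤ 1 * |(v i j : ℝ)| :=
                      mul_le_mul_of_nonneg_right h1 (abs_nonneg _)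
                  _ = |(v i j : ℝ)| := one_mul _
            _ = (B j : ℝ) := by push_cast [hB]; rfl
        have : |((r j : ℤ) : ℝ)| ≤ ((B j : ℤ) : ℝ) := hreal
        exact_mod_cast (by push_cast at this ⊢; exact this : ((|r j| : ℤ) : ℝ) ≤ ((B j : ℤ) : ℝ))
    have hvT : ∀ i, v i ∈ T := by
      intro i
      constructor
      · refine (hmemσ (v i)).2 ⟨fun l => if l = i then 1 else 0,
          fun l => by by_cases h : l = i <;> simp [h], fun j => ?_⟩
        simp [Finset.sum_ite_eq']
      · intro j
        exact Finset.single_le_sum (f := fun l => |v l j|)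
          (fun l _ => abs_nonneg _) (Finset.mem_univ i)
    have hmeq : m = r + ∑ i, d i • v i := by
      rw [hr]
      have : ∀ i, (d i : ℤ) • v i = d i • v i := fun i => by
        ext j; simp
      rw [Finset.sum_congr rfl (fun i _ => (this i).symm)]
      abel
    rw [hmeq]
    refine AddSubmonoid.add_mem _ (AddSubmonoid.subset_closure hrT) ?_
    exact AddSubmonoid.sum_mem _ (fun i _ =>
      AddSubmonoid.nsmul_mem _ (AddSubmonoid.subset_closure (hvT i)) _)
  · -- closure T ⊆ σZ
    intro m hm
    induction hm using AddSubmonoid.closure_induction with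
    | mem x hx => exact hx.1
    | zero =>
        refine (hmemσ 0).2 ⟨0, fun i => le_refl 0, fun j => by simp⟩
    | add x y hx hy hxs hys =>
        obtain ⟨c, hc, heq⟩ := (hmemσ x).1 hxs
        obtain ⟨c', hc', heq'⟩ := (hmemσ y).1 hys
        refine (hmemσ (x + y)).2 ⟨c + c', fun i => add_nonneg (hc i) (hc' i),
          fun j => ?_⟩
        simp only [Pi.add_apply]
        push_cast
        rw [heq j, heq' j, ← Finset.sum_add_distrib]
        congr 1
        ext i
        simp [add_mul]
end
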